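/- arXiv:1709.04840 — 7 statements merged into one kernel-verified Lean document; each statement's English description precedes it below -/
import Mathlib

section
/- Under the Gaussian linear model, the partial variance s_j² = Var(Y | X_{-j}) satisfies s_j² = σ^{jj} / (σ^{jj}σ^{yy} − (σ^{jy})²) = β_j²/d_{jj} + σ_ε², where Σ^{-1}=(σ^{ij}) is the inverse of the joint covariance matrix of (Y, X_1,…,X_p) and D=(d_{ij}) is the precision matrix of the covariates. -/
/-!
Writing `Y = B X + ε` with `Cov X = C` and `Cov ε = S`, the joint covariance of `(Y, X)` is
`[[B C Bᵀ + S, B C], [C Bᵀ, C]]`, and block multiplication shows that its inverse is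
`[[S⁻¹, -S⁻¹ B], [-Bᵀ S⁻¹, C⁻¹ + Bᵀ S⁻¹ B]]`. For a scalar response this gives
`σ^{yy} = σε⁻²`, `σ^{jy} = -βⱼ σε⁻²` and `σ^{jj} = d_{jj} + βⱼ² σε⁻²`, after which the claim is
a field identity.
-/

open Matrix

namespace Matrix

variable {m n R : Type*} [Fintype m] [Fintype n] [CommRing R]

/-- The covariance matrix of `(Y, X)` when `Y = B X + ε`, `Cov X = C`, `Cov ε = S`, `ε ⟂ X`. -/
def regressionCov (B : Matrix m n R) (C : Matrix n n R) (S : Matrix m m R) :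
    Matrix (m ⊕ n) (m ⊕ n) R :=
  fromBlocks (B * C * Bᵀ + S) (B * C) (C * Bᵀ) C

theorem inv_regressionCov [DecidableEq m] [DecidableEq n]
    (B : Matrix m n R) (C : Matrix n n R) (S : Matrix m m R)
    (hC : IsUnit C.det) (hS : IsUnit S.det) :
    (regressionCov B C S)⁻¹ =
      fromBlocks S⁻¹ (-(S⁻¹ * B)) (-(Bᵀ * S⁻¹)) (C⁻¹ + Bᵀ * S⁻¹ * B) := by
  refine inv_eq_right_inv ?_
  rw [regressionCov, fromBlocks_multiply, ← fromBlocks_one]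
  congr 1 <;>
    simp only [Matrix.mul_add, Matrix.add_mul, Matrix.mul_neg, Matrix.mul_assoc, Matrix.mul_one,
      mul_nonsing_inv _ hC, mul_nonsing_inv _ hS, mul_nonsing_inv_cancel_left _ _ hS] <;>
    abel

theorem fromBlocks_mulVec_eq_regressionCov (C : Matrix n n R) (hC : Cᵀ = C) (β : n → R)
    (s : R) :
    fromBlocks (of fun _ _ => β ⬝ᵥ (C *ᵥ β) + s) (of fun _ j => (C *ᵥ β) j)
        (of fun j _ => (C *ᵥ β) j) C =
      regressionCov (replicateRow Unit β) C (of fun _ _ => s) := by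
  have hrow : replicateRow Unit β * C = of fun _ j => (C *ᵥ β) j := by
    ext _ j
    rw [← vecMul_transpose, hC]
    rfl
  have hcol : C * (replicateRow Unit β)ᵀ = of fun j _ => (C *ᵥ β) j := by
    ext j _
    rfl
  rw [regressionCov, hrow, hcol]
  congr 1
  ext
  simp [mul_apply, dotProduct, mul_comm]

end Matrix

/-- Under the Gaussian linear model, the partial variance
`s_j² = Var(Y | X_{-j}) = σ^{jj} / (σ^{jj}σ^{yy} − (σ^{jy})²)` equals `β_j²/d_{jj} + σε²`,
where `(σ^{ij})` is the inverse of the joint covariance matrix `Sig` of `(Y, X_1, …, X_p)`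
and `D = C⁻¹` is the precision matrix of the covariates. -/
theorem stmt1 (p : ℕ) (C : Matrix (Fin p) (Fin p) ℝ) (hC : C.PosDef)
    (β : Fin p → ℝ) (σε : ℝ) (hσ : 0 < σε)
    (Sig : Matrix (Unit ⊕ Fin p) (Unit ⊕ Fin p) ℝ)
    (hSig : Sig = Matrix.fromBlocks
      (Matrix.of fun _ _ => β ⬝ᵥ (C *ᵥ β) + σε ^ 2)
      (Matrix.of fun _ j => (C *ᵥ β) j)
      (Matrix.of fun j _ => (C *ᵥ β) j) C) :
    ∀ j : Fin p,
      Sig⁻¹ (Sum.inr j) (Sum.inr j) /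
          (Sig⁻¹ (Sum.inr j) (Sum.inr j) * Sig⁻¹ (Sum.inl ()) (Sum.inl ()) -
            (Sig⁻¹ (Sum.inr j) (Sum.inl ())) ^ 2)
        = (β j) ^ 2 / C⁻¹ j j + σε ^ 2 := by
  intro j
  have hCdet : IsUnit C.det := (isUnit_iff_isUnit_det C).mp hC.isUnit
  have hSdet : IsUnit (of fun (_ : Unit) (_ : Unit) => σε ^ 2).det := by
    simpa only [det_unique, of_apply, isUnit_iff_ne_zero, ne_eq, pow_eq_zero_iff,
      OfNat.ofNat_ne_zero, not_false_eq_true] using hσ.ne'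
  have hdjj : C⁻¹ j j ≠ 0 := hC.inv.diag_pos.ne'
  rw [hSig, fromBlocks_mulVec_eq_regressionCov C hC.1 β, inv_regressionCov _ _ _ hCdet hSdet]
  simp only [inv_subsingleton, of_apply, Ring.inverse_eq_inv', transpose_replicateRow,
    fromBlocks_apply₂₂, Matrix.add_apply, mul_apply, Finset.univ_unique, PUnit.default_eq_unit,
    replicateCol_apply, diagonal_apply_eq, Finset.sum_const, Finset.card_singleton, one_smul,
    replicateRow_apply, fromBlocks_apply₁₁, fromBlocks_apply₂₁, Matrix.neg_apply, even_two,
    Even.neg_pow]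
  field_simp
  ring
end

section
/- Define the semi-standard partial covariance γ_j = ρ_j s_j, where ρ_j is the partial correlation of Y and X_j given X_{-j} and s_j² = Var(Y|X_{-j}). Under the Gaussian linear model, γ_j = β_j / √(d_{jj}), so in particular β_j = 0 if and only if γ_j = 0. -/
/-!
Writing `e = σ_ε²` and `u = Cβ`, the joint covariance is `[[βᵀu + e, uᵀ], [u, C]]`, whose inverse is
`[[1/e, -βᵀ/e], [-β/e, C⁻¹ + ββᵀ/e]]`. Hence `σ^{yy} = 1/e`, `σ^{jy} = -β_j/e` and
`σ^{jj} = d_{jj} + β_j²/e`. The product `ρ_j s_j` equals `-σ^{jy} / √(σ^{yy} (σ^{jj}σ^{yy} - (σ^{jy})²))`,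
and the radicand collapses to `d_{jj}/e²`, leaving `β_j / √d_{jj}`.
-/

open Matrix

theorem Matrix.inv_fromBlocks_linearModel {α n : Type*} [Field α] [Fintype n] [DecidableEq n]
    {C : Matrix n n α} (hC : C.IsSymm) (hdet : IsUnit C.det) (β : n → α) {e : α} (he : e ≠ 0) :
    (fromBlocks (of fun _ _ => β ⬝ᵥ (C *ᵥ β) + e) (replicateRow Unit (C *ᵥ β))
      (replicateCol Unit (C *ᵥ β)) C)⁻¹ =
    fromBlocks (of fun _ _ => e⁻¹) (replicateRow Unit (-e⁻¹ • β)) (replicateCol Unit (-e⁻¹ • β))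
      (C⁻¹ + e⁻¹ • vecMulVec β β) := by
  have hvec : (C *ᵥ β) ᵥ* C⁻¹ = β := by
    rw [← hC.eq, mulVec_transpose, vecMul_vecMul, hC.eq, mul_nonsing_inv C hdet, vecMul_one]
  apply inv_eq_right_inv
  rw [fromBlocks_multiply, ← fromBlocks_one]
  congr 1
  · ext
    simp only [dotProduct_comm β, neg_smul, replicateRow_mul_replicateCol, dotProduct_neg,
      dotProduct_smul, smul_eq_mul, Matrix.add_apply, mul_apply, Finset.univ_unique,
      PUnit.default_eq_unit, of_apply, Finset.sum_const, Finset.card_singleton, one_smul,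
      one_apply_eq]
    field_simp
    ring
  · ext
    simp only [dotProduct_comm β, neg_smul, Matrix.mul_add, ← replicateRow_vecMul, hvec,
      Matrix.mul_smul, vecMul_vecMulVec, replicateRow_smul, Matrix.add_apply, mul_apply,
      Finset.univ_unique, PUnit.default_eq_unit, of_apply, replicateRow_apply, Pi.neg_apply,
      Pi.smul_apply, smul_eq_mul, mul_neg, Finset.sum_neg_distrib, Finset.sum_const,
      Finset.card_singleton, one_smul, Matrix.smul_apply, zero_apply]
    field_simp
    ring
  · ext
    simp only [neg_smul, ← replicateCol_mulVec, mulVec_neg, mulVec_smul, Matrix.add_apply,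
      mul_apply, Finset.univ_unique, PUnit.default_eq_unit, replicateCol_apply, of_apply,
      Finset.sum_const, Finset.card_singleton, one_smul, Pi.neg_apply, Pi.smul_apply, smul_eq_mul,
      zero_apply]
    field_simp
    ring
  · rw [mul_add, mul_nonsing_inv C hdet, Matrix.mul_smul, mul_vecMulVec, ← vecMulVec_eq,
      vecMulVec_smul]
    module

theorem Real.neg_div_sqrt_mul_mul_sqrt_div {a c : ℝ} (ha : 0 ≤ a) (hc : 0 < c) (b : ℝ) :
    -b / √(c * a) * √(c / (c * a - b ^ 2)) = -b / √(a * (c * a - b ^ 2)) := by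
  have hc' : √c ≠ 0 := (Real.sqrt_pos.mpr hc).ne'
  rw [Real.sqrt_mul hc.le, Real.sqrt_div hc.le, Real.sqrt_mul ha]
  field_simp

theorem Real.partialCorr_mul_sqrt_condVar_of_linearModel {d e : ℝ} (hd : 0 < d) (he : 0 < e)
    (t : ℝ) :
    -(-e⁻¹ * t) / √((d + e⁻¹ * (t * t)) * e⁻¹) *
      √((d + e⁻¹ * (t * t)) / ((d + e⁻¹ * (t * t)) * e⁻¹ - (-e⁻¹ * t) ^ 2)) = t / √d := by
  have hradicand : e⁻¹ * ((d + e⁻¹ * (t * t)) * e⁻¹ - (-e⁻¹ * t) ^ 2) = e⁻¹ ^ 2 * d := by ring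
  have hc : 0 < d + e⁻¹ * (t * t) :=
    add_pos_of_pos_of_nonneg hd (mul_nonneg (inv_nonneg.mpr he.le) (mul_self_nonneg t))
  rw [Real.neg_div_sqrt_mul_mul_sqrt_div (inv_nonneg.mpr he.le) hc, hradicand,
    Real.sqrt_mul (by positivity), Real.sqrt_sq (by positivity)]
  field_simp

/-- The semi-standard partial covariance `γ_j = ρ_j s_j`, where
`ρ_j = −σ^{jy}/√(σ^{jj}σ^{yy})` is the partial correlation between `Y` and `X_j` given `X_{-j}`
and `s_j² = Var(Y|X_{-j}) = σ^{jj}/(σ^{jj}σ^{yy} − (σ^{jy})²)`, satisfies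
`γ_j = β_j / √(d_{jj})` under the Gaussian linear model; in particular `β_j = 0 ↔ γ_j = 0`. -/
theorem stmt2 (p : ℕ) (C : Matrix (Fin p) (Fin p) ℝ) (hC : C.PosDef)
    (β : Fin p → ℝ) (σε : ℝ) (hσ : 0 < σε)
    (Sig : Matrix (Unit ⊕ Fin p) (Unit ⊕ Fin p) ℝ)
    (hSig : Sig = Matrix.fromBlocks
      (Matrix.of fun _ _ => β ⬝ᵥ (C *ᵥ β) + σε ^ 2)
      (Matrix.of fun _ j => (C *ᵥ β) j)
      (Matrix.of fun j _ => (C *ᵥ β) j) C)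
    (ρ s γ : Fin p → ℝ)
    (hρ : ∀ j, ρ j = -(Sig⁻¹ (Sum.inr j) (Sum.inl ())) /
      Real.sqrt (Sig⁻¹ (Sum.inr j) (Sum.inr j) * Sig⁻¹ (Sum.inl ()) (Sum.inl ())))
    (hs : ∀ j, s j = Real.sqrt (Sig⁻¹ (Sum.inr j) (Sum.inr j) /
      (Sig⁻¹ (Sum.inr j) (Sum.inr j) * Sig⁻¹ (Sum.inl ()) (Sum.inl ()) -
        (Sig⁻¹ (Sum.inr j) (Sum.inl ())) ^ 2)))
    (hγ : ∀ j, γ j = ρ j * s j) :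
    ∀ j : Fin p, γ j = β j / Real.sqrt (C⁻¹ j j) ∧ (β j = 0 ↔ γ j = 0) := by
  have hσ2 : 0 < σε ^ 2 := pow_pos hσ 2
  have hinv := hSig ▸ inv_fromBlocks_linearModel (isHermitian_iff_isSymm.mp hC.isHermitian)
    ((isUnit_iff_isUnit_det C).mp hC.isUnit) β hσ2.ne'
  intro j
  have hd : 0 < C⁻¹ j j := hC.inv.diag_pos
  have hγj : γ j = β j / √(C⁻¹ j j) := by
    simp only [hγ, hρ, hs, hinv, fromBlocks_apply₁₁, fromBlocks_apply₂₁, fromBlocks_apply₂₂,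
      of_apply, replicateCol_apply, Matrix.add_apply, Matrix.smul_apply, vecMulVec_apply,
      Pi.smul_apply, smul_eq_mul]
    exact Real.partialCorr_mul_sqrt_condVar_of_linearModel hd hσ2 (β j)
  refine ⟨hγj, ?_⟩
  rw [hγj, div_eq_zero_iff, or_iff_left (Real.sqrt_pos.mpr hd).ne']
end

section
/- Suppose the block-exchangeable correlation matrix C^n (diagonal blocks exchangeable with parameters α_1, α_3 ∈ [0,1), off-block constant α_2) is positive definite for all n with q_n → ∞ and r_n = p_n − q_n → ∞. If |C^n_{21}(C^n_{11})^{-1} sign(β_{(1)})| ≥ 1 entrywise for all sufficiently large n (with m_n = |Σ sign(β_i)| → ∞), then |α_2| ≥ α_1 and α_3 ≥ |α_2|. -/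
open Matrix Filter

/-- The `q×q` exchangeable matrix: `1` on the diagonal, `α` off-diagonal. -/
noncomputable def exchMat (q : ℕ) (α : ℝ) : Matrix (Fin q) (Fin q) ℝ :=
  Matrix.of fun i j => if i = j then 1 else α

/-- The `r×q` constant matrix with all entries `α`. -/
noncomputable def constMat (r q : ℕ) (α : ℝ) : Matrix (Fin r) (Fin q) ℝ :=
  Matrix.of fun _ _ => α

/-- The block-exchangeable correlation matrix. -/
noncomputable def blockExch (q r : ℕ) (α1 α2 α3 : ℝ) :
    Matrix (Fin q ⊕ Fin r) (Fin q ⊕ Fin r) ℝ :=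
  Matrix.fromBlocks (exchMat q α1) (constMat q r α2) (constMat r q α2) (exchMat r α3)

/-!
The vector `C₂₁ C₁₁⁻¹ s` is constant, equal to `α₂ (∑ sᵢ) / t` with `t = 1 - α₁ + α₁ q`, because
`C₁₁` multiplies the coordinate sum of every vector by `t`. Since `|∑ sᵢ| ≤ q`, the entrywise condition gives
`t ≤ |α₂| q`, which already forces `α₁ ≤ |α₂|`. Testing positive definiteness of `C` on vectors
constant on each block gives the Schur-complement bound `α₂² q r < (1 - α₃ + α₃ r) t`; combined with
the previous bound it yields `(|α₂| - α₃) r < 1 - α₃`, impossible for `r → ∞` unless `|α₂| ≤ α₃`.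
-/

lemma exchMat_mulVec_apply (q : ℕ) (α : ℝ) (x : Fin q → ℝ) (i : Fin q) :
    (exchMat q α *ᵥ x) i = (1 - α) * x i + α * ∑ j, x j := by
  have h : ∀ j, (if i = j then (1 : ℝ) else α) * x j
      = (if i = j then (1 - α) * x j else 0) + α * x j := by
    intro j
    split_ifs <;> ring
  simp only [exchMat, mulVec, dotProduct, of_apply, h, Finset.sum_add_distrib,
    Finset.sum_ite_eq, Finset.mem_univ, if_true, Finset.mul_sum]

lemma constMat_mulVec_apply (r q : ℕ) (α : ℝ) (x : Fin q → ℝ) (i : Fin r) :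
    (constMat r q α *ᵥ x) i = α * ∑ j, x j := by
  simp [constMat, mulVec, dotProduct, Finset.mul_sum]

lemma sum_exchMat_mulVec (q : ℕ) (α : ℝ) (x : Fin q → ℝ) :
    ∑ i, (exchMat q α *ᵥ x) i = (1 - α + α * q) * ∑ j, x j := by
  simp only [exchMat_mulVec_apply, Finset.sum_add_distrib, ← Finset.mul_sum, Finset.sum_const,
    Finset.card_univ, Fintype.card_fin, nsmul_eq_mul]
  ring

lemma mul_sum_exchMat_inv_mulVec (q : ℕ) (α : ℝ) (hdet : IsUnit (exchMat q α).det)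
    (x : Fin q → ℝ) : (1 - α + α * q) * ∑ i, ((exchMat q α)⁻¹ *ᵥ x) i = ∑ i, x i := by
  rw [← sum_exchMat_mulVec, mulVec_mulVec, mul_nonsing_inv _ hdet, one_mulVec]

lemma constMat_mulVec_exchMat_inv_mulVec_apply (r q : ℕ) {α₁ : ℝ} (α₂ : ℝ)
    (ht : 1 - α₁ + α₁ * q ≠ 0) (hdet : IsUnit (exchMat q α₁).det) (x : Fin q → ℝ)
    (i : Fin r) :
    (constMat r q α₂ *ᵥ ((exchMat q α₁)⁻¹ *ᵥ x)) i = α₂ * (∑ j, x j) / (1 - α₁ + α₁ * q) := by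
  rw [constMat_mulVec_apply, ← mul_sum_exchMat_inv_mulVec q α₁ hdet x]
  field_simp

lemma blockExch_mulVec_sumElim_const (q r : ℕ) (α₁ α₂ α₃ a b : ℝ) :
    blockExch q r α₁ α₂ α₃ *ᵥ Sum.elim (fun _ => a) (fun _ => b)
      = Sum.elim (fun _ => (1 - α₁ + α₁ * q) * a + α₂ * r * b)
          (fun _ => α₂ * q * a + (1 - α₃ + α₃ * r) * b) := by
  ext (i | i) <;>
  simp [blockExch, fromBlocks_mulVec, exchMat_mulVec_apply, constMat_mulVec_apply] <;> ring

lemma sq_mul_lt_of_blockExch_posDef {q r : ℕ} {α₁ α₂ α₃ : ℝ} (hr : 0 < r)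
    (ht : 0 < 1 - α₁ + α₁ * q) (hpd : (blockExch q r α₁ α₂ α₃).PosDef) :
    α₂ ^ 2 * q * r < (1 - α₃ + α₃ * r) * (1 - α₁ + α₁ * q) := by
  set t := 1 - α₁ + α₁ * q
  set x : Fin q ⊕ Fin r → ℝ := Sum.elim (fun _ => -α₂ * r) (fun _ => t)
  have hx : x ≠ 0 := fun h => ht.ne' (congrFun h (Sum.inr ⟨0, hr⟩))
  -- the quadratic form at `x` is `r t ((1 - α₃ + α₃ r) t - α₂² q r)`
  have hquad := hpd.dotProduct_mulVec_pos hx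
  simp only [x, star_trivial, blockExch_mulVec_sumElim_const, sumElim_dotProduct_sumElim] at hquad
  simp only [dotProduct, Finset.sum_const, Finset.card_univ, Fintype.card_fin, nsmul_eq_mul] at hquad
  have hrt : (0 : ℝ) < r * t := mul_pos (by exact_mod_cast hr) ht
  nlinarith

lemma abs_sum_le_card_of_sign {q : ℕ} {s : Fin q → ℝ} (hs : ∀ i, s i = 1 ∨ s i = -1) :
    |∑ i, s i| ≤ q := by
  calc |∑ i, s i| ≤ ∑ i, |s i| := Finset.abs_sum_le_sum_abs _ _
    _ = q := by
      rw [Finset.sum_congr rfl fun i _ => show |s i| = 1 by rcases hs i with h | h <;> simp [h]]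
      simp

lemma nonpos_of_eventually_mul_lt {u : ℕ → ℕ} (hu : Tendsto u atTop atTop) {c d : ℝ}
    (h : ∀ᶠ n in atTop, c * u n < d) : c ≤ 0 := by
  by_contra! hc
  have hcu : Tendsto (fun n => c * (u n : ℝ)) atTop atTop :=
    (tendsto_natCast_atTop_atTop.comp hu).const_mul_atTop hc
  obtain ⟨n, hlt, hge⟩ := (h.and (hcu.eventually_ge_atTop d)).exists
  exact hlt.not_ge hge

theorem stmt9_general (α1 α2 α3 : ℝ) (hα1 : 0 ≤ α1 ∧ α1 < 1)
    (q r : ℕ → ℕ) (s : ∀ n, Fin (q n) → ℝ)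
    (hs : ∀ n i, s n i = 1 ∨ s n i = -1)
    (hr : Tendsto r atTop atTop)
    (hpd : ∀ n, (blockExch (q n) (r n) α1 α2 α3).PosDef)
    (hcond : ∀ᶠ n in atTop, ∀ i : Fin (r n),
      1 ≤ |((constMat (r n) (q n) α2) *ᵥ ((exchMat (q n) α1)⁻¹ *ᵥ s n)) i|) :
    α1 ≤ |α2| ∧ |α2| ≤ α3 := by
  have ht n : 0 < 1 - α1 + α1 * q n := by nlinarith [mul_nonneg hα1.1 (q n).cast_nonneg]
  -- the `inl`-`inl` principal submatrix of `blockExch` is `exchMat (q n) α1`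
  have hdet n : IsUnit (exchMat (q n) α1).det :=
    ((hpd n).submatrix Sum.inl_injective).det_pos.ne'.isUnit
  have hbound : ∀ᶠ n in atTop, 0 < r n ∧ 1 - α1 + α1 * q n ≤ |α2| * q n := by
    filter_upwards [hcond, hr.eventually_ge_atTop 1] with n hc hrn
    have h := hc ⟨0, hrn⟩
    rw [constMat_mulVec_exchMat_inv_mulVec_apply _ _ _ (ht n).ne' (hdet n), abs_div, abs_mul,
      abs_of_pos (ht n), one_le_div (ht n)] at h
    exact ⟨hrn, h.trans (mul_le_mul_of_nonneg_left (abs_sum_le_card_of_sign (hs n)) (abs_nonneg _))⟩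
  refine ⟨?_, ?_⟩
  · obtain ⟨n, -, h⟩ := hbound.exists
    nlinarith [(q n).cast_nonneg (α := ℝ), abs_nonneg α2]
  · refine sub_nonpos.mp (nonpos_of_eventually_mul_lt hr (d := 1 - α3) ?_)
    filter_upwards [hbound] with n ⟨hrn, h⟩
    have hschur := sq_mul_lt_of_blockExch_posDef hrn (ht n) (hpd n)
    have : |α2| * (1 - α1 + α1 * q n) * r n ≤ α2 ^ 2 * q n * r n :=
      calc _ ≤ |α2| * (|α2| * q n) * r n := by gcongr
        _ = α2 ^ 2 * q n * r n := by rw [← sq_abs α2]; ring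
    nlinarith [ht n]

/-- Suppose the block-exchangeable correlation matrix `C^n` (parameters
`α₁, α₃ ∈ [0,1)`, cross-block `α₂`) is positive definite for all `n`, with `q_n → ∞`,
`r_n = p_n − q_n → ∞` and `m_n = |Σ sign(β_i)| → ∞`.  If `|C^n_{21}(C^n_{11})⁻¹ sign(β_{(1)})| ≥ 1`
entrywise for all sufficiently large `n`, then `|α₂| ≥ α₁` and `α₃ ≥ |α₂|`. -/
theorem stmt9 (α1 α2 α3 : ℝ) (hα1 : 0 ≤ α1 ∧ α1 < 1) (hα3 : 0 ≤ α3 ∧ α3 < 1)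
    (q r m : ℕ → ℕ) (s : ∀ n, Fin (q n) → ℝ)
    (hs : ∀ n i, s n i = 1 ∨ s n i = -1)
    (hm : ∀ n, (m n : ℝ) = |∑ i, s n i|)
    (hq : Tendsto q atTop atTop) (hr : Tendsto r atTop atTop)
    (hmtop : Tendsto m atTop atTop)
    (hpd : ∀ n, (blockExch (q n) (r n) α1 α2 α3).PosDef)
    (hcond : ∀ᶠ n in atTop, ∀ i : Fin (r n),
      1 ≤ |((constMat (r n) (q n) α2) *ᵥ ((exchMat (q n) α1)⁻¹ *ᵥ s n)) i|) :
    α1 ≤ |α2| ∧ |α2| ≤ α3 :=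
  stmt9_general α1 α2 α3 hα1 q r s hs hr hpd hcond
end

section
/- For the block-exchangeable correlation matrix, the transformed quantity satisfies |V(2) C^n_{21} (C^n_{11})^{-1} V(1)^{-1} sign(γ_{(1)})| = |C^n_{21}(C^n_{11})^{-1} sign(β_{(1)})| · √((1−α_3)/(1−α_1)) · √(((1+(q_n−2)α_1)(1+(r_n−1)α_3) − (q_n−1) r_n α_2²) / ((1+(q_n−1)α_1)(1+(r_n−2)α_3) − q_n (r_n−1) α_2²)) entrywise, where V(k) are the diagonal matrices of conditional standard deviations √(1/d_{jj}). -/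
/-!
The inverse `D` of a block-exchangeable matrix `C` is again block-exchangeable, so its diagonal
is constant on each block: `d₁ = N / ((1 - α₁) Δ)` on the first block and
`d₂ = M / ((1 - α₃) Δ)` on the second, with `Δ` as in `blockExchCoreDet` and `N`, `M` the
numerator and denominator under the last square root of the statement. Hence `V(1)` and `V(2)` are scalar matrices and the left-hand
side is `√(d₁ / d₂)` times the right-hand quantity, which is the claim. Positive definiteness of
`C` gives `Δ > 0` (evaluate the quadratic form at a suitable block-constant vector), so the
explicit inverse is legitimate, and `d₂ > 0` as a diagonal entry of `C⁻¹`.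
-/

open Matrix

lemma constMat_eq_smul (m n : ℕ) (α : ℝ) : constMat m n α = α • constMat m n 1 := by
  ext i j; simp [constMat]

lemma constMat_one_mul_constMat_one (a b c : ℕ) :
    constMat a b 1 * constMat b c 1 = (b : ℝ) • constMat a c 1 := by
  ext i k; simp [constMat, Matrix.mul_apply]

lemma exchMat_eq_smul_one_add_smul (n : ℕ) (α : ℝ) :
    exchMat n α = (1 - α) • 1 + α • constMat n n 1 := by
  ext i j
  by_cases h : i = j <;> simp [exchMat, constMat, h]

lemma sum_ite_eq_add_sub_one_mul (n : ℕ) (i : Fin n) (a b : ℝ) :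
    ∑ k : Fin n, (if i = k then a else b) = a + ((n : ℝ) - 1) * b := by
  have h : ∀ k : Fin n, (if i = k then a else b) = b + (if i = k then a - b else 0) :=
    fun k => by split_ifs <;> ring
  simp only [h, Finset.sum_add_distrib, Finset.sum_const, Finset.sum_ite_eq, Finset.mem_univ,
    if_true, Finset.card_univ, Fintype.card_fin, nsmul_eq_mul]
  ring

section BlockExch

variable {q r : ℕ} {α1 α2 α3 : ℝ}

/-- `blockExch` maps a vector constant on each block, with values `a` and `b`, to one constant on
each block, with values given by the `2 × 2` matrix `[[1 + (q-1)α₁, r α₂], [q α₂, 1 + (r-1)α₃]]`;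
this is its determinant. -/
noncomputable def blockExchCoreDet (q r : ℕ) (α1 α2 α3 : ℝ) : ℝ :=
  (1 + ((q : ℝ) - 1) * α1) * (1 + ((r : ℝ) - 1) * α3) - (q : ℝ) * (r : ℝ) * α2 ^ 2

lemma dotProduct_blockExch_mulVec_blockConst (a b : ℝ) :
    (Sum.elim (fun _ : Fin q => a) (fun _ : Fin r => b)) ⬝ᵥ
      (blockExch q r α1 α2 α3 *ᵥ Sum.elim (fun _ => a) (fun _ => b))
      = (q : ℝ) * (1 + ((q : ℝ) - 1) * α1) * a ^ 2 + 2 * (q : ℝ) * (r : ℝ) * α2 * a * b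
        + (r : ℝ) * (1 + ((r : ℝ) - 1) * α3) * b ^ 2 := by
  simp only [blockExch, dotProduct, mulVec, Fintype.sum_sum_type, Sum.elim_inl, Sum.elim_inr,
    fromBlocks_apply₁₁, fromBlocks_apply₁₂, fromBlocks_apply₂₁, fromBlocks_apply₂₂,
    exchMat, constMat, of_apply]
  simp only [← Finset.sum_mul, sum_ite_eq_add_sub_one_mul, Finset.sum_const, Finset.card_univ,
    Fintype.card_fin, nsmul_eq_mul]
  ring

lemma blockExch_quadForm_pos (hpd : (blockExch q r α1 α2 α3).PosDef) {a b : ℝ}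
    (hq : 0 < q) (hr : 0 < r) (hab : a ≠ 0 ∨ b ≠ 0) :
    0 < (q : ℝ) * (1 + ((q : ℝ) - 1) * α1) * a ^ 2 + 2 * (q : ℝ) * (r : ℝ) * α2 * a * b
        + (r : ℝ) * (1 + ((r : ℝ) - 1) * α3) * b ^ 2 := by
  rw [← dotProduct_blockExch_mulVec_blockConst]
  refine hpd.dotProduct_mulVec_pos fun h => ?_
  rcases hab with ha | hb
  · exact ha (by simpa using congrFun h (Sum.inl ⟨0, hq⟩))
  · exact hb (by simpa using congrFun h (Sum.inr ⟨0, hr⟩))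

lemma blockExchCoreDet_pos (hpd : (blockExch q r α1 α2 α3).PosDef) (hq : 0 < q) (hr : 0 < r) :
    0 < blockExchCoreDet q r α1 α2 α3 := by
  have hq' : (0 : ℝ) < q := by exact_mod_cast hq
  have hr' : (0 : ℝ) < r := by exact_mod_cast hr
  have hK1 : 0 < 1 + ((q : ℝ) - 1) * α1 := by
    have := blockExch_quadForm_pos hpd (a := 1) (b := 0) hq hr (by simp)
    nlinarith
  have h := blockExch_quadForm_pos hpd (a := -(r : ℝ) * α2) (b := 1 + ((q : ℝ) - 1) * α1)
    hq hr (Or.inr hK1.ne')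
  have hid : (q : ℝ) * (1 + ((q : ℝ) - 1) * α1) * (-(r : ℝ) * α2) ^ 2
      + 2 * (q : ℝ) * (r : ℝ) * α2 * (-(r : ℝ) * α2) * (1 + ((q : ℝ) - 1) * α1)
      + (r : ℝ) * (1 + ((r : ℝ) - 1) * α3) * (1 + ((q : ℝ) - 1) * α1) ^ 2
      = (r : ℝ) * (1 + ((q : ℝ) - 1) * α1) * blockExchCoreDet q r α1 α2 α3 := by
    rw [blockExchCoreDet]; ring
  rw [hid] at h
  exact pos_of_mul_pos_right h (mul_pos hr' hK1).le

noncomputable def blockExchInv (q r : ℕ) (α1 α2 α3 : ℝ) :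
    Matrix (Fin q ⊕ Fin r) (Fin q ⊕ Fin r) ℝ :=
  let Δ := blockExchCoreDet q r α1 α2 α3
  fromBlocks
    ((1 - α1)⁻¹ • 1 + (((1 + ((r : ℝ) - 1) * α3) / Δ - (1 - α1)⁻¹) / q) • constMat q q 1)
    (constMat q r (-α2 / Δ))
    (constMat r q (-α2 / Δ))
    ((1 - α3)⁻¹ • 1 + (((1 + ((q : ℝ) - 1) * α1) / Δ - (1 - α3)⁻¹) / r) • constMat r r 1)

lemma blockExch_mul_blockExchInv (hq : q ≠ 0) (hr : r ≠ 0) (h1 : α1 ≠ 1) (h3 : α3 ≠ 1)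
    (hΔ : blockExchCoreDet q r α1 α2 α3 ≠ 0) :
    blockExch q r α1 α2 α3 * blockExchInv q r α1 α2 α3 = 1 := by
  have h1' : 1 - α1 ≠ 0 := sub_ne_zero.mpr h1.symm
  have h3' : 1 - α3 ≠ 0 := sub_ne_zero.mpr h3.symm
  have hq' : (q : ℝ) ≠ 0 := by exact_mod_cast hq
  have hr' : (r : ℝ) ≠ 0 := by exact_mod_cast hr
  rw [blockExch, blockExchInv, fromBlocks_multiply, ← fromBlocks_one]
  refine fromBlocks_inj.mpr ⟨?_, ?_, ?_, ?_⟩ <;>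
  · simp only [exchMat_eq_smul_one_add_smul, constMat_eq_smul _ _ α2,
      constMat_eq_smul _ _ (-α2 / _), Matrix.add_mul, Matrix.mul_add, Matrix.smul_mul,
      Matrix.mul_smul, constMat_one_mul_constMat_one, Matrix.one_mul, Matrix.mul_one, smul_smul, smul_add]
    match_scalars
    all_goals field_simp
    all_goals rw [blockExchCoreDet]; ring

lemma blockExchInv_inl_inl (hq : q ≠ 0) (h1 : α1 ≠ 1) (hΔ : blockExchCoreDet q r α1 α2 α3 ≠ 0)
    (j : Fin q) :
    blockExchInv q r α1 α2 α3 (Sum.inl j) (Sum.inl j) =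
      ((1 + ((q : ℝ) - 2) * α1) * (1 + ((r : ℝ) - 1) * α3) - ((q : ℝ) - 1) * (r : ℝ) * α2 ^ 2) /
        ((1 - α1) * blockExchCoreDet q r α1 α2 α3) := by
  have h1' : 1 - α1 ≠ 0 := sub_ne_zero.mpr h1.symm
  have hq' : (q : ℝ) ≠ 0 := by exact_mod_cast hq
  simp only [blockExchInv, fromBlocks_apply₁₁, Matrix.add_apply, Matrix.smul_apply, one_apply_eq,
    constMat, of_apply, smul_eq_mul, mul_one]
  field_simp
  rw [blockExchCoreDet]; ring

lemma blockExchInv_inr_inr (hr : r ≠ 0) (h3 : α3 ≠ 1) (hΔ : blockExchCoreDet q r α1 α2 α3 ≠ 0)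
    (j : Fin r) :
    blockExchInv q r α1 α2 α3 (Sum.inr j) (Sum.inr j) =
      ((1 + ((q : ℝ) - 1) * α1) * (1 + ((r : ℝ) - 2) * α3) - (q : ℝ) * ((r : ℝ) - 1) * α2 ^ 2) /
        ((1 - α3) * blockExchCoreDet q r α1 α2 α3) := by
  have h3' : 1 - α3 ≠ 0 := sub_ne_zero.mpr h3.symm
  have hr' : (r : ℝ) ≠ 0 := by exact_mod_cast hr
  simp only [blockExchInv, fromBlocks_apply₂₂, Matrix.add_apply, Matrix.smul_apply, one_apply_eq,
    constMat, of_apply, smul_eq_mul, mul_one]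
  field_simp
  rw [blockExchCoreDet]; ring

end BlockExch

lemma inv_diagonal_const {n : Type*} [Fintype n] [DecidableEq n] (b : ℝ) :
    (diagonal fun _ : n => b)⁻¹ = diagonal fun _ => b⁻¹ := by
  rcases eq_or_ne b 0 with rfl | hb
  · simp
  · exact inv_eq_left_inv (by simp [hb])

lemma diagonal_const_mul_mul_inv_diagonal_const_mulVec {m n : Type*} [Fintype m] [Fintype n]
    [DecidableEq m] [DecidableEq n] (a b : ℝ) (M : Matrix m n ℝ) (v : n → ℝ) :
    (diagonal (fun _ : m => a) * M * (diagonal fun _ : n => b)⁻¹) *ᵥ v =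
      (a / b) • (M *ᵥ v) := by
  ext i
  simp only [inv_diagonal_const, mulVec, dotProduct, diagonal_mul, mul_diagonal, Finset.mul_sum,
    Pi.smul_apply, smul_eq_mul]
  exact Finset.sum_congr rfl fun _ _ => by ring

lemma sqrt_one_div_div_sqrt_one_div (x : ℝ) {y : ℝ} (hy : 0 ≤ y) :
    √(1 / y) / √(1 / x) = √(x / y) := by
  rw [one_div, one_div, Real.sqrt_inv, Real.sqrt_inv, inv_div_inv, Real.sqrt_div' _ hy]

lemma div_mul_div_div_mul_eq (a b u w c : ℝ) (hc : c ≠ 0) :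
    a / (u * c) / (b / (w * c)) = w / u * (a / b) := by
  field_simp

theorem stmt11_general (q r : ℕ) (hq : 2 ≤ q) (hr : 2 ≤ r)
    (α1 α2 α3 : ℝ) (hα1 : -1 < α1 ∧ α1 < 1) (hα3 : -1 < α3 ∧ α3 < 1)
    (hpd : (blockExch q r α1 α2 α3).PosDef)
    (s : Fin q → ℝ)
    (D : Matrix (Fin q ⊕ Fin r) (Fin q ⊕ Fin r) ℝ)
    (hD : D = (blockExch q r α1 α2 α3)⁻¹)
    (V1 : Matrix (Fin q) (Fin q) ℝ)
    (hV1 : V1 = Matrix.diagonal fun j => Real.sqrt (1 / D (Sum.inl j) (Sum.inl j)))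
    (V2 : Matrix (Fin r) (Fin r) ℝ)
    (hV2 : V2 = Matrix.diagonal fun j => Real.sqrt (1 / D (Sum.inr j) (Sum.inr j))) :
    ∀ i : Fin r,
      |((V2 * (constMat r q α2) * (exchMat q α1)⁻¹ * V1⁻¹) *ᵥ s) i|
        = |((constMat r q α2) *ᵥ ((exchMat q α1)⁻¹ *ᵥ s)) i|
          * Real.sqrt ((1 - α3) / (1 - α1))
          * Real.sqrt
            (((1 + ((q : ℝ) - 2) * α1) * (1 + ((r : ℝ) - 1) * α3) -
                ((q : ℝ) - 1) * (r : ℝ) * α2 ^ 2) /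
              ((1 + ((q : ℝ) - 1) * α1) * (1 + ((r : ℝ) - 2) * α3) -
                (q : ℝ) * ((r : ℝ) - 1) * α2 ^ 2)) := by
  intro i
  have hq0 : q ≠ 0 := by omega
  have hr0 : r ≠ 0 := by omega
  have hΔ := (blockExchCoreDet_pos hpd (by omega) (by omega)).ne'
  have hDeq : D = blockExchInv q r α1 α2 α3 := hD ▸
    inv_eq_right_inv (blockExch_mul_blockExchInv hq0 hr0 hα1.2.ne hα3.2.ne hΔ)
  have hd2 : 0 < D (Sum.inr i) (Sum.inr i) := (hD ▸ hpd.inv).diag_pos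
  simp only [hDeq, blockExchInv_inl_inl hq0 hα1.2.ne hΔ, blockExchInv_inr_inr hr0 hα3.2.ne hΔ]
    at hV1 hV2 hd2
  subst hV1 hV2
  rw [Matrix.mul_assoc _ (constMat r q α2), diagonal_const_mul_mul_inv_diagonal_const_mulVec,
    Pi.smul_apply, smul_eq_mul, abs_mul, abs_of_nonneg (by positivity), mulVec_mulVec,
    sqrt_one_div_div_sqrt_one_div _ hd2.le, div_mul_div_div_mul_eq _ _ _ _ _ hΔ,
    Real.sqrt_mul (div_nonneg (by linarith) (by linarith))]
  ring

/-- For the positive definite block-exchangeable correlation matrix with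
parameters `α₁` (size `q`), `α₃` (size `r`), `α₂` (cross block), letting `D = C⁻¹` and
`V(1), V(2)` the diagonal matrices of conditional standard deviations `√(1/d_{jj})`,
the transformed quantity satisfies, entrywise,
`|V(2) C_{21} C_{11}⁻¹ V(1)⁻¹ s| = |C_{21} C_{11}⁻¹ s| · √((1−α₃)/(1−α₁)) ·`
`√(((1+(q−2)α₁)(1+(r−1)α₃) − (q−1)r α₂²)/((1+(q−1)α₁)(1+(r−2)α₃) − q(r−1) α₂²))`. -/
theorem stmt11 (q r : ℕ) (hq : 2 ≤ q) (hr : 2 ≤ r)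
    (α1 α2 α3 : ℝ) (hα1 : -1 < α1 ∧ α1 < 1) (hα3 : -1 < α3 ∧ α3 < 1)
    (hpd : (blockExch q r α1 α2 α3).PosDef)
    (s : Fin q → ℝ) (hs : ∀ i, s i = 1 ∨ s i = -1)
    (D : Matrix (Fin q ⊕ Fin r) (Fin q ⊕ Fin r) ℝ)
    (hD : D = (blockExch q r α1 α2 α3)⁻¹)
    (V1 : Matrix (Fin q) (Fin q) ℝ)
    (hV1 : V1 = Matrix.diagonal fun j => Real.sqrt (1 / D (Sum.inl j) (Sum.inl j)))
    (V2 : Matrix (Fin r) (Fin r) ℝ)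
    (hV2 : V2 = Matrix.diagonal fun j => Real.sqrt (1 / D (Sum.inr j) (Sum.inr j))) :
    ∀ i : Fin r,
      |((V2 * (constMat r q α2) * (exchMat q α1)⁻¹ * V1⁻¹) *ᵥ s) i|
        = |((constMat r q α2) *ᵥ ((exchMat q α1)⁻¹ *ᵥ s)) i|
          * Real.sqrt ((1 - α3) / (1 - α1))
          * Real.sqrt
            (((1 + ((q : ℝ) - 2) * α1) * (1 + ((r : ℝ) - 1) * α3) -
                ((q : ℝ) - 1) * (r : ℝ) * α2 ^ 2) /
              ((1 + ((q : ℝ) - 1) * α1) * (1 + ((r : ℝ) - 2) * α3) -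
                (q : ℝ) * ((r : ℝ) - 1) * α2 ^ 2)) :=
  stmt11_general q r hq hr α1 α2 α3 hα1 hα3 hpd s D hD V1 hV1 V2 hV2
end

section
/- Under the block-exchangeable structure with α_1,α_3 ∈ [0,1), q_n, p_n−q_n → ∞, if there exists η > 0 with |α_2| ≤ (1−η)·√((1−α_1)/(1−α_3))·α_1·L̲ where L̲ = liminf q_n/m_n, then the transformed strong irrepresentable condition holds for large n: there is η₀ > 0 such that every entry of |V(2) C^n_{21}(C^n_{11})^{-1} V(1)^{-1} sign(γ_{(1)})| is at most 1 − η₀. -/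
open Matrix Filter

/-- Diagonal matrix `V(1)` of conditional standard deviations `√(1/d_{jj})`, relevant block. -/
noncomputable def V1mat (q r : ℕ) (α1 α2 α3 : ℝ) : Matrix (Fin q) (Fin q) ℝ :=
  Matrix.diagonal fun j =>
    Real.sqrt (1 / ((blockExch q r α1 α2 α3)⁻¹ (Sum.inl j) (Sum.inl j)))

/-- Diagonal matrix `V(2)` of conditional standard deviations `√(1/d_{jj})`, irrelevant block. -/
noncomputable def V2mat (q r : ℕ) (α1 α2 α3 : ℝ) : Matrix (Fin r) (Fin r) ℝ :=
  Matrix.diagonal fun j =>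
    Real.sqrt (1 / ((blockExch q r α1 α2 α3)⁻¹ (Sum.inr j) (Sum.inr j)))

/-!
Every block of `C = blockExch q r α₁ α₂ α₃` lies in the algebra spanned by the identity and the
all-ones matrix `J`, where `J * J = q • J`; solving in that algebra gives `C⁻¹` in closed form.
Consequently `C₂₁ C₁₁⁻¹` is the constant matrix `α₂ / (1 + (q - 1) α₁)`, and `V(1)`, `V(2)` are
scalar matrices, so every entry of the transformed vector has absolute value
`√(d₁ / d₂) |α₂| m / (1 + (q - 1) α₁)`, with `d₁`, `d₂` the two diagonal values of `C⁻¹`.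
Positive semidefiniteness of `C` for all `n` forces `α₂² ≤ α₁ α₃` in the limit, which gives
`d₁ ≤ 1 / (1 - α₁)` and `d₂ ≥ (1 - 1/r) / (1 - α₃)`. The hypothesis on `|α₂|` then bounds the
entries by `(1 - η) √(r / (r - 1)) · L̲ m / q`, and eventually `L̲ m / q` and `√(r / (r - 1))`
are both below `1 + η/2`.
-/

section ConstMat

variable {p q r : ℕ}

theorem constMat_add (a b : ℝ) : constMat r q a + constMat r q b = constMat r q (a + b) := rfl

theorem constMat_zero : constMat r q 0 = 0 := rfl

theorem smul_constMat (c a : ℝ) : c • constMat r q a = constMat r q (c * a) := rfl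

theorem constMat_mul_constMat (a b : ℝ) :
    constMat r q a * constMat q p b = constMat r p (q * a * b) := by
  ext
  simp only [constMat, mul_apply, of_apply, Finset.sum_const, Finset.card_univ, Fintype.card_fin,
    nsmul_eq_mul]
  ring

theorem constMat_mulVec (a : ℝ) (v : Fin q → ℝ) : constMat r q a *ᵥ v = fun _ => a * ∑ j, v j := by
  ext; simp [constMat, mulVec, dotProduct, Finset.mul_sum]

theorem smul_one_add_constMat_mul_constMat (a b c : ℝ) :
    (a • 1 + constMat q q b) * constMat q r c = constMat q r (a * c + q * b * c) := by
  rw [Matrix.add_mul, constMat_mul_constMat, Matrix.smul_mul, Matrix.one_mul]; ext; simp [constMat]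

theorem constMat_mul_smul_one_add_constMat (a b c : ℝ) :
    constMat r q c * (a • 1 + constMat q q b) = constMat r q (c * a + q * c * b) := by
  rw [Matrix.mul_add, constMat_mul_constMat, Matrix.mul_smul, Matrix.mul_one]
  ext
  simp only [constMat, smul_of, Matrix.add_apply, of_apply, Pi.smul_apply, smul_eq_mul]
  ring

theorem smul_one_add_constMat_mul_smul_one_add_constMat (a b c d : ℝ) :
    (a • 1 + constMat q q b) * (c • 1 + constMat q q d)
      = (a * c) • 1 + constMat q q (a * d + b * c + q * b * d) := by
  rw [Matrix.mul_add, smul_one_add_constMat_mul_constMat, Matrix.add_mul, Matrix.smul_mul,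
    Matrix.one_mul, Matrix.mul_smul, Matrix.mul_one]
  ext i j
  simp only [constMat, smul_of, Matrix.add_apply, Matrix.smul_apply, one_apply, smul_eq_mul,
    mul_ite, mul_one, mul_zero, of_apply, Pi.smul_apply]
  ring

theorem smul_one_add_constMat_eq_one {a b : ℝ} (ha : a = 1) (hb : b = 0) :
    a • (1 : Matrix (Fin q) (Fin q) ℝ) + constMat q q b = 1 := by
  rw [ha, hb, one_smul, constMat_zero, add_zero]

theorem exchMat_eq (α : ℝ) : exchMat q α = (1 - α) • 1 + constMat q q α := by
  ext i j; by_cases h : i = j <;> simp [exchMat, constMat, one_apply, h]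

end ConstMat

theorem inv_smul_one {n K : Type*} [Fintype n] [DecidableEq n] [Field K] (c : K) :
    (c • (1 : Matrix n n K))⁻¹ = c⁻¹ • 1 := by
  obtain rfl | hc := eq_or_ne c 0
  · simp
  · exact inv_eq_right_inv (by rw [smul_mul_smul, Matrix.one_mul, mul_inv_cancel₀ hc, one_smul])

section ExchMat

variable {q r : ℕ} {α : ℝ}

noncomputable def exchRowSum (q : ℕ) (α : ℝ) : ℝ := 1 + ((q : ℝ) - 1) * α

theorem exchRowSum_eq (q : ℕ) (α : ℝ) : exchRowSum q α = (1 - α) + α * q := by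
  rw [exchRowSum]; ring

theorem exchRowSum_pos (h0 : 0 ≤ α) (h1 : α < 1) : 0 < exchRowSum q α := by
  rw [exchRowSum_eq]; nlinarith [(Nat.cast_nonneg q : (0 : ℝ) ≤ q)]

theorem div_exchRowSum_le_inv (h0 : 0 ≤ α) (h1 : α < 1) (hq : 0 < q) :
    α / exchRowSum q α ≤ (q : ℝ)⁻¹ := by
  rw [div_le_iff₀ (exchRowSum_pos h0 h1), inv_mul_eq_div, le_div_iff₀ (by positivity),
    exchRowSum_eq]
  linarith

theorem exchMat_mulVec_const (α c : ℝ) :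
    exchMat q α *ᵥ (fun _ => c) = fun _ => exchRowSum q α * c := by
  ext i
  rw [exchMat_eq, add_mulVec, smul_mulVec, one_mulVec, constMat_mulVec]
  simp only [Finset.sum_const, Finset.card_univ, Fintype.card_fin, nsmul_eq_mul, Pi.add_apply,
    Pi.smul_apply, smul_eq_mul, exchRowSum_eq]
  ring

theorem exchMat_inv (hα : α ≠ 1) (hP : exchRowSum q α ≠ 0) :
    (exchMat q α)⁻¹ = (1 - α)⁻¹ • 1 + constMat q q (-α / ((1 - α) * exchRowSum q α)) := by
  have hα' : 1 - α ≠ 0 := sub_ne_zero.2 hα.symm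
  refine inv_eq_right_inv ?_
  rw [exchMat_eq, smul_one_add_constMat_mul_smul_one_add_constMat]
  refine smul_one_add_constMat_eq_one (mul_inv_cancel₀ hα') ?_
  field_simp
  rw [exchRowSum]
  ring

theorem constMat_mul_exchMat_inv (hα : α ≠ 1) (hP : exchRowSum q α ≠ 0) (β : ℝ) :
    constMat r q β * (exchMat q α)⁻¹ = constMat r q (β / exchRowSum q α) := by
  have hα' : 1 - α ≠ 0 := sub_ne_zero.2 hα.symm
  rw [exchMat_inv hα hP, constMat_mul_smul_one_add_constMat]
  congr 1
  field_simp
  rw [exchRowSum]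
  ring

end ExchMat

namespace BlockExch

variable (q r : ℕ) (α1 α2 α3 : ℝ)

noncomputable def denom : ℝ := exchRowSum q α1 * exchRowSum r α3 - α2 ^ 2 * q * r

noncomputable def invConst₁₁ : ℝ :=
  (α2 ^ 2 * r - α1 * exchRowSum r α3) / ((1 - α1) * denom q r α1 α2 α3)

noncomputable def invConst₁₂ : ℝ := -α2 / denom q r α1 α2 α3

noncomputable def invConst₂₂ : ℝ :=
  (α2 ^ 2 * q - α3 * exchRowSum q α1) / ((1 - α3) * denom q r α1 α2 α3)

noncomputable def inv : Matrix (Fin q ⊕ Fin r) (Fin q ⊕ Fin r) ℝ :=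
  fromBlocks ((1 - α1)⁻¹ • 1 + constMat q q (invConst₁₁ q r α1 α2 α3))
    (constMat q r (invConst₁₂ q r α1 α2 α3)) (constMat r q (invConst₁₂ q r α1 α2 α3))
    ((1 - α3)⁻¹ • 1 + constMat r r (invConst₂₂ q r α1 α2 α3))

variable {q r α1 α2 α3}

theorem mul_inv (h1 : α1 ≠ 1) (h3 : α3 ≠ 1) (hD : denom q r α1 α2 α3 ≠ 0) :
    blockExch q r α1 α2 α3 * inv q r α1 α2 α3 = 1 := by
  have h1' : 1 - α1 ≠ 0 := sub_ne_zero.2 h1.symm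
  have h3' : 1 - α3 ≠ 0 := sub_ne_zero.2 h3.symm
  rw [blockExch, inv, fromBlocks_multiply, exchMat_eq, exchMat_eq, ← fromBlocks_one]
  simp only [smul_one_add_constMat_mul_smul_one_add_constMat, smul_one_add_constMat_mul_constMat,
    constMat_mul_smul_one_add_constMat, constMat_mul_constMat, add_assoc, constMat_add,
    invConst₁₁, invConst₁₂, invConst₂₂]
  congr 1
  · refine smul_one_add_constMat_eq_one (mul_inv_cancel₀ h1') ?_
    field_simp
    simp only [denom, exchRowSum]
    ring
  · rw [← constMat_zero]
    congr 1
    field_simp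
    simp only [denom, exchRowSum]
    ring
  · rw [← constMat_zero]
    congr 1
    field_simp
    simp only [denom, exchRowSum]
    ring
  · rw [add_left_comm, constMat_add]
    refine smul_one_add_constMat_eq_one (mul_inv_cancel₀ h3') ?_
    field_simp
    simp only [denom, exchRowSum]
    ring

theorem denom_pos (h1 : 0 ≤ α1) (h1' : α1 < 1) (h3 : 0 ≤ α3) (h3' : α3 < 1)
    (h2 : α2 ^ 2 ≤ α1 * α3) : 0 < denom q r α1 α2 α3 := by
  have hq : (0 : ℝ) ≤ q := Nat.cast_nonneg q
  have hr : (0 : ℝ) ≤ r := Nat.cast_nonneg r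
  rw [denom, exchRowSum_eq, exchRowSum_eq]
  nlinarith [mul_le_mul_of_nonneg_right h2 (mul_nonneg hq hr),
    mul_pos (sub_pos.2 h1') (sub_pos.2 h3'), mul_nonneg (mul_nonneg (sub_pos.2 h1').le h3) hr,
    mul_nonneg (mul_nonneg (sub_pos.2 h3').le h1) hq]

theorem invConst₁₁_nonpos (h1 : 0 ≤ α1) (h1' : α1 < 1) (h3 : 0 ≤ α3) (h3' : α3 < 1)
    (h2 : α2 ^ 2 ≤ α1 * α3) : invConst₁₁ q r α1 α2 α3 ≤ 0 := by
  refine div_nonpos_of_nonpos_of_nonneg ?_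
    (mul_pos (sub_pos.2 h1') (denom_pos h1 h1' h3 h3' h2)).le
  rw [exchRowSum_eq]
  nlinarith [mul_le_mul_of_nonneg_right h2 (Nat.cast_nonneg r : (0 : ℝ) ≤ r),
    mul_nonneg h1 (sub_pos.2 h3').le]

theorem le_inv_add_invConst₂₂ (h1 : 0 ≤ α1) (h1' : α1 < 1) (h3 : 0 ≤ α3) (h3' : α3 < 1)
    (h2 : α2 ^ 2 ≤ α1 * α3) (hr : 0 < r) :
    (1 - α3)⁻¹ * (1 - (r : ℝ)⁻¹) ≤ (1 - α3)⁻¹ + invConst₂₂ q r α1 α2 α3 := by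
  have hD := denom_pos (q := q) (r := r) h1 h1' h3 h3' h2
  have h3'' : 1 - α3 ≠ 0 := (sub_pos.2 h3').ne'
  have hr' : (r : ℝ) ≠ 0 := by positivity
  have gap : (1 - α3)⁻¹ + invConst₂₂ q r α1 α2 α3 - (1 - α3)⁻¹ * (1 - (r : ℝ)⁻¹)
      = exchRowSum q α1 / (r * denom q r α1 α2 α3) := by
    rw [invConst₂₂]
    field_simp
    simp only [denom, exchRowSum]
    ring
  have := div_nonneg (exchRowSum_pos (q := q) h1 h1').le (mul_pos (Nat.cast_pos.2 hr) hD).le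
  linarith

end BlockExch

theorem blockExch_inv_eq {q r : ℕ} {α1 α2 α3 : ℝ} (h1 : α1 ≠ 1) (h3 : α3 ≠ 1)
    (hD : BlockExch.denom q r α1 α2 α3 ≠ 0) :
    (blockExch q r α1 α2 α3)⁻¹ = BlockExch.inv q r α1 α2 α3 :=
  inv_eq_right_inv (BlockExch.mul_inv h1 h3 hD)

noncomputable def irrepMat (q r : ℕ) (α1 α2 α3 : ℝ) : Matrix (Fin r) (Fin q) ℝ :=
  V2mat q r α1 α2 α3 * constMat r q α2 * (exchMat q α1)⁻¹ * (V1mat q r α1 α2 α3)⁻¹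

theorem irrepMat_eq {q r : ℕ} {α1 α2 α3 : ℝ} (h1 : α1 ≠ 1) (h3 : α3 ≠ 1)
    (hD : BlockExch.denom q r α1 α2 α3 ≠ 0) (hP : exchRowSum q α1 ≠ 0) :
    irrepMat q r α1 α2 α3 = constMat r q
      (√(1 / ((1 - α3)⁻¹ + BlockExch.invConst₂₂ q r α1 α2 α3)) *
        √((1 - α1)⁻¹ + BlockExch.invConst₁₁ q r α1 α2 α3) * (α2 / exchRowSum q α1)) := by
  have hV1 : V1mat q r α1 α2 α3
      = (√((1 - α1)⁻¹ + BlockExch.invConst₁₁ q r α1 α2 α3))⁻¹ • 1 := by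
    rw [smul_one_eq_diagonal, V1mat, blockExch_inv_eq h1 h3 hD]
    simp [BlockExch.inv, constMat]
  have hV2 : V2mat q r α1 α2 α3
      = √(1 / ((1 - α3)⁻¹ + BlockExch.invConst₂₂ q r α1 α2 α3)) • 1 := by
    rw [smul_one_eq_diagonal, V2mat, blockExch_inv_eq h1 h3 hD]
    simp [BlockExch.inv, constMat]
  rw [irrepMat, hV1, hV2, inv_smul_one, inv_inv, Matrix.smul_mul, Matrix.one_mul,
    Matrix.smul_mul, Matrix.smul_mul, constMat_mul_exchMat_inv h1 hP, Matrix.mul_smul,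
    Matrix.mul_one, smul_constMat, smul_constMat]
  congr 1
  ring

section IrrepBound

variable {q r : ℕ} {α1 α2 α3 : ℝ}

theorem abs_irrepMat_mulVec_apply_le (h1 : 0 ≤ α1) (h1' : α1 < 1) (h3 : 0 ≤ α3) (h3' : α3 < 1)
    (h2 : α2 ^ 2 ≤ α1 * α3) (hr : 2 ≤ r) (s : Fin q → ℝ) (i : Fin r) :
    |(irrepMat q r α1 α2 α3 *ᵥ s) i|
      ≤ √((1 - α3) / (1 - α1) * (1 - (r : ℝ)⁻¹)⁻¹) * |α2| * |∑ j, s j| / exchRowSum q α1 := by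
  have hP := exchRowSum_pos (q := q) h1 h1'
  have hD := BlockExch.denom_pos (q := q) (r := r) h1 h1' h3 h3' h2
  have hr' : 0 < 1 - (r : ℝ)⁻¹ := by
    rw [sub_pos, inv_lt_one₀ (by positivity)]
    exact_mod_cast hr
  have hd₂ := BlockExch.le_inv_add_invConst₂₂ (q := q) h1 h1' h3 h3' h2 (r := r) (by omega)
  have hd₁ := BlockExch.invConst₁₁_nonpos (q := q) (r := r) h1 h1' h3 h3' h2
  have hκ : √(1 / ((1 - α3)⁻¹ + BlockExch.invConst₂₂ q r α1 α2 α3)) *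
      √((1 - α1)⁻¹ + BlockExch.invConst₁₁ q r α1 α2 α3)
        ≤ √((1 - α3) / (1 - α1) * (1 - (r : ℝ)⁻¹)⁻¹) := by
    have : 0 < (1 - α3)⁻¹ * (1 - (r : ℝ)⁻¹) := mul_pos (inv_pos.2 (sub_pos.2 h3')) hr'
    calc _ ≤ √(1 / ((1 - α3)⁻¹ * (1 - (r : ℝ)⁻¹))) * √((1 - α1)⁻¹) := by
          gcongr
          linarith
      _ = _ := by
          rw [← Real.sqrt_mul (by positivity)]
          field_simp
  rw [irrepMat_eq h1'.ne h3'.ne hD.ne' hP.ne', constMat_mulVec, abs_mul, abs_mul, abs_div,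
    abs_of_pos hP, abs_of_nonneg (by positivity)]
  calc _ = √(1 / ((1 - α3)⁻¹ + BlockExch.invConst₂₂ q r α1 α2 α3)) *
      √((1 - α1)⁻¹ + BlockExch.invConst₁₁ q r α1 α2 α3) * |α2| * |∑ j, s j| / exchRowSum q α1 := by
        ring
    _ ≤ _ := by gcongr

theorem abs_irrepMat_mulVec_apply_le_of_abs_le (h1 : 0 ≤ α1) (h1' : α1 < 1) (h3 : 0 ≤ α3)
    (h3' : α3 < 1) (h2 : α2 ^ 2 ≤ α1 * α3) (hq : 0 < q) (hr : 2 ≤ r) {c : ℝ} (hc : 0 ≤ c)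
    (hα2 : |α2| ≤ c * √((1 - α1) / (1 - α3)) * α1) (s : Fin q → ℝ) (i : Fin r) :
    |(irrepMat q r α1 α2 α3 *ᵥ s) i| ≤ c * √((1 - (r : ℝ)⁻¹)⁻¹) * (|∑ j, s j| * (q : ℝ)⁻¹) := by
  have hP := exchRowSum_pos (q := q) h1 h1'
  have hρ : 0 ≤ (1 - (r : ℝ)⁻¹)⁻¹ :=
    inv_nonneg.2 (sub_nonneg.2 (inv_le_one_of_one_le₀ (by exact_mod_cast (by omega : 1 ≤ r))))
  have hsqrt : √((1 - α3) / (1 - α1) * (1 - (r : ℝ)⁻¹)⁻¹) * √((1 - α1) / (1 - α3))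
      = √((1 - (r : ℝ)⁻¹)⁻¹) := by
    rw [← Real.sqrt_mul (by have := sub_pos.2 h1'; have := sub_pos.2 h3'; positivity)]
    congr 1
    field_simp [(sub_pos.2 h1').ne', (sub_pos.2 h3').ne']
  calc _ ≤ √((1 - α3) / (1 - α1) * (1 - (r : ℝ)⁻¹)⁻¹) * |α2| * |∑ j, s j| / exchRowSum q α1 :=
        abs_irrepMat_mulVec_apply_le h1 h1' h3 h3' h2 hr s i
    _ ≤ √((1 - α3) / (1 - α1) * (1 - (r : ℝ)⁻¹)⁻¹) * (c * √((1 - α1) / (1 - α3)) * α1) *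
        |∑ j, s j| / exchRowSum q α1 := by gcongr
    _ = c * √((1 - (r : ℝ)⁻¹)⁻¹) * (|∑ j, s j| * (α1 / exchRowSum q α1)) := by
        rw [← hsqrt]; ring
    _ ≤ c * √((1 - (r : ℝ)⁻¹)⁻¹) * (|∑ j, s j| * (q : ℝ)⁻¹) :=
        mul_le_mul_of_nonneg_left
          (mul_le_mul_of_nonneg_left (div_exchRowSum_le_inv h1 h1' hq) (abs_nonneg _))
          (mul_nonneg hc (Real.sqrt_nonneg _))

end IrrepBound

theorem blockExch_quadForm {q r : ℕ} (α1 α2 α3 t : ℝ) :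
    Sum.elim (fun _ : Fin q => t) (fun _ : Fin r => 1) ⬝ᵥ
        (blockExch q r α1 α2 α3 *ᵥ Sum.elim (fun _ => t) (fun _ => 1))
      = q * exchRowSum q α1 * (t * t) + 2 * q * r * α2 * t + r * exchRowSum r α3 := by
  simp only [blockExch, fromBlocks_mulVec, Sum.elim_comp_inl, Sum.elim_comp_inr,
    exchMat_mulVec_const, constMat_mulVec, dotProduct, Fintype.sum_sum_type, Sum.elim_inl,
    Sum.elim_inr, Pi.add_apply, Finset.sum_const, Finset.card_univ, Fintype.card_fin, nsmul_eq_mul]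
  ring

theorem sq_mul_mul_le_of_posSemidef {q r : ℕ} {α1 α2 α3 : ℝ}
    (hC : (blockExch q r α1 α2 α3).PosSemidef) (hq : 0 < q) (hr : 0 < r) :
    α2 ^ 2 * q * r ≤ exchRowSum q α1 * exchRowSum r α3 := by
  have hdisc := discrim_le_zero fun t => by
    simpa only [blockExch_quadForm, star_trivial] using hC.dotProduct_mulVec_nonneg
      (Sum.elim (fun _ => t) (fun _ => 1))
  have hqr : (0 : ℝ) < q * r := by positivity
  rw [discrim] at hdisc
  nlinarith

theorem tendsto_exchRowSum_div {ι : Type*} {l : Filter ι} {q : ι → ℕ} (hq : Tendsto q l atTop)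
    (α : ℝ) : Tendsto (fun n => exchRowSum (q n) α / q n) l (nhds α) := by
  have hq' := (tendsto_natCast_atTop_atTop (R := ℝ)).comp hq
  have hlim : Tendsto (fun n => α + (1 - α) / (q n : ℝ)) l (nhds α) := by
    simpa using tendsto_const_nhds.add (tendsto_const_nhds.div_atTop hq')
  refine hlim.congr' ((hq.eventually_gt_atTop 0).mono fun n hn => ?_)
  have : (q n : ℝ) ≠ 0 := by positivity
  simp only [exchRowSum_eq]
  field_simp
  ring

theorem sq_le_mul_of_forall_posSemidef {ι : Type*} {l : Filter ι} [l.NeBot] {q r : ι → ℕ}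
    {α1 α2 α3 : ℝ} (hq : Tendsto q l atTop) (hr : Tendsto r l atTop)
    (hC : ∀ n, (blockExch (q n) (r n) α1 α2 α3).PosSemidef) : α2 ^ 2 ≤ α1 * α3 := by
  refine ge_of_tendsto ((tendsto_exchRowSum_div hq α1).mul (tendsto_exchRowSum_div hr α3)) ?_
  filter_upwards [hq.eventually_gt_atTop 0, hr.eventually_gt_atTop 0] with n hqn hrn
  rw [div_mul_div_comm, le_div_iff₀ (by positivity), ← mul_assoc]
  exact sq_mul_mul_le_of_posSemidef (hC n) hqn hrn

theorem Real.liminf_nonneg {ι : Type*} {l : Filter ι} {u : ι → ℝ} (hu : ∀ i, 0 ≤ u i) :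
    0 ≤ liminf u l := by
  rw [liminf_eq]
  by_cases hb : BddAbove {a | ∀ᶠ n in l, a ≤ u n}
  · exact le_csSup hb (Eventually.of_forall hu)
  · rw [Real.sSup_of_not_bddAbove hb]

theorem eventually_liminf_mul_div_lt {ι : Type*} {l : Filter ι} {a b : ι → ℝ}
    (ha : ∀ i, 0 ≤ a i) (hb : ∀ i, 0 ≤ b i) (hL : 0 < liminf (fun i => b i / a i) l)
    {t : ℝ} (ht : 1 < t) : ∀ᶠ i in l, liminf (fun i => b i / a i) l * a i / b i < t := by
  set L := liminf (fun i => b i / a i) l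
  have hLt : L / t < L := div_lt_self hL ht
  filter_upwards [eventually_lt_of_lt_liminf hLt
    (isBoundedUnder_of ⟨0, fun i => div_nonneg (hb i) (ha i)⟩)] with i hi
  rcases (ha i).eq_or_lt with hai | hai
  · rw [← hai, mul_zero, zero_div]
    linarith
  rcases (hb i).eq_or_lt with hbi | hbi
  · rw [← hbi, zero_div] at hi
    exact absurd hi (div_pos hL (by linarith)).not_gt
  rw [div_lt_div_iff₀ (by linarith) hai] at hi
  rw [div_lt_iff₀ hbi]
  linarith

theorem tendsto_sqrt_inv_one_sub_inv {ι : Type*} {l : Filter ι} {r : ι → ℕ}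
    (hr : Tendsto r l atTop) : Tendsto (fun n => √((1 - (r n : ℝ)⁻¹)⁻¹)) l (nhds 1) := by
  have h := tendsto_inv_atTop_zero.comp ((tendsto_natCast_atTop_atTop (R := ℝ)).comp hr)
  simpa using ((tendsto_const_nhds (x := (1 : ℝ))).sub h).inv₀ (by simp) |>.sqrt

theorem pos_and_pos_of_mul_mul_pos {a b c : ℝ} (h : 0 < a * b * c) (hb : 0 ≤ b) (hc : 0 ≤ c) :
    0 < a ∧ 0 < c := by
  have hab := pos_of_mul_pos_left h hc
  exact ⟨pos_of_mul_pos_left hab hb, pos_of_mul_pos_right h hab.le⟩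

theorem stmt12_general (α1 α2 α3 : ℝ) (hα1 : 0 ≤ α1 ∧ α1 < 1) (hα3 : 0 ≤ α3 ∧ α3 < 1)
    (q r m : ℕ → ℕ) (s : ∀ n, Fin (q n) → ℝ)
    (hm : ∀ n, (m n : ℝ) = |∑ i, s n i|)
    (hq : Tendsto q atTop atTop) (hr : Tendsto r atTop atTop)
    (hpd : ∀ n, (blockExch (q n) (r n) α1 α2 α3).PosDef)
    (η : ℝ) (hη : 0 < η)
    (hbound : |α2| ≤ (1 - η) * Real.sqrt ((1 - α1) / (1 - α3)) * α1 *
      liminf (fun n => (q n : ℝ) / (m n : ℝ)) atTop) :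
    ∃ η0 > 0, ∀ᶠ n in atTop, ∀ i : Fin (r n),
      |((V2mat (q n) (r n) α1 α2 α3 * constMat (r n) (q n) α2 *
          (exchMat (q n) α1)⁻¹ * (V1mat (q n) (r n) α1 α2 α3)⁻¹) *ᵥ s n) i|
        ≤ 1 - η0 := by
  set L := liminf (fun n => (q n : ℝ) / (m n : ℝ)) atTop
  obtain rfl | hα2 := eq_or_ne α2 0
  · exact ⟨1, one_pos, Eventually.of_forall fun n i => by simp [constMat_zero]⟩
  have h2 : α2 ^ 2 ≤ α1 * α3 := sq_le_mul_of_forall_posSemidef hq hr fun n => (hpd n).posSemidef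
  have hL0 : 0 ≤ L := Real.liminf_nonneg fun n => by positivity
  have hprod : 0 < (1 - η) * (√((1 - α1) / (1 - α3)) * α1) * L :=
    ((abs_pos.2 hα2).trans_le hbound).trans_eq (by ring)
  obtain ⟨hη1, hL⟩ := pos_and_pos_of_mul_mul_pos hprod (mul_nonneg (Real.sqrt_nonneg _) hα1.1) hL0
  have ht : 1 < 1 + η / 2 := by linarith
  refine ⟨1 - (1 - η) * (1 + η / 2) ^ 2,
    by nlinarith [mul_pos (mul_pos hη hη) (by linarith : (0 : ℝ) < 3 + η)], ?_⟩
  filter_upwards [hq.eventually_gt_atTop 0, hr.eventually_ge_atTop 2,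
    (tendsto_sqrt_inv_one_sub_inv hr).eventually (gt_mem_nhds ht),
    eventually_liminf_mul_div_lt (fun n => (m n).cast_nonneg) (fun n => (q n).cast_nonneg) hL ht]
    with n hqn hrn hρ hLm i
  calc _ ≤ (1 - η) * L * √((1 - (r n : ℝ)⁻¹)⁻¹) * (m n * (q n : ℝ)⁻¹) := by
        rw [hm]
        exact abs_irrepMat_mulVec_apply_le_of_abs_le hα1.1 hα1.2 hα3.1 hα3.2 h2 hqn hrn
          (mul_nonneg hη1.le hL0) (hbound.trans_eq (by ring)) (s n) i
    _ = (1 - η) * √((1 - (r n : ℝ)⁻¹)⁻¹) * (L * m n / q n) := by ring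
    _ ≤ (1 - η) * (1 + η / 2) * (1 + η / 2) :=
        mul_le_mul (mul_le_mul_of_nonneg_left hρ.le hη1.le) hLm.le (by positivity) (by positivity)
    _ = 1 - (1 - (1 - η) * (1 + η / 2) ^ 2) := by ring

/-- Under the block-exchangeable structure with `α₁, α₃ ∈ [0,1)`,
`m_n, q_n, p_n − q_n → ∞` and `C^n` positive definite: if there exists `η > 0` with
`|α₂| ≤ (1−η)·√((1−α₁)/(1−α₃))·α₁·L̲`, `L̲ = liminf q_n/m_n`, then the transformed strong
irrepresentable condition holds for large `n`: there is `η₀ > 0` such that eventually every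
entry of `|V(2) C^n_{21}(C^n_{11})⁻¹ V(1)⁻¹ sign(γ_{(1)})|` is at most `1 − η₀`. -/
theorem stmt12 (α1 α2 α3 : ℝ) (hα1 : 0 ≤ α1 ∧ α1 < 1) (hα3 : 0 ≤ α3 ∧ α3 < 1)
    (q r m : ℕ → ℕ) (s : ∀ n, Fin (q n) → ℝ)
    (hs : ∀ n i, s n i = 1 ∨ s n i = -1)
    (hm : ∀ n, (m n : ℝ) = |∑ i, s n i|)
    (hq : Tendsto q atTop atTop) (hr : Tendsto r atTop atTop)
    (hmtop : Tendsto m atTop atTop)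
    (hpd : ∀ n, (blockExch (q n) (r n) α1 α2 α3).PosDef)
    (η : ℝ) (hη : 0 < η)
    (hbound : |α2| ≤ (1 - η) * Real.sqrt ((1 - α1) / (1 - α3)) * α1 *
      liminf (fun n => (q n : ℝ) / (m n : ℝ)) atTop) :
    ∃ η0 > 0, ∀ᶠ n in atTop, ∀ i : Fin (r n),
      |((V2mat (q n) (r n) α1 α2 α3 * constMat (r n) (q n) α2 *
          (exchMat (q n) α1)⁻¹ * (V1mat (q n) (r n) α1 α2 α3)⁻¹) *ᵥ s n) i|
        ≤ 1 - η0 :=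
  stmt12_general α1 α2 α3 hα1 hα3 q r m s hm hq hr hpd η hη hbound
end

section
/- In the block-AR(1) correlation structure with parameters α_1, α_2, α_3 ∈ (0,1) (i.e. (C_{11})_{ij} = α_1^{|i−j|}, (C_{22})_{ij} = α_3^{|i−j|}, (C_{12})_{ij} = α_2^{|i−(q+j)|}), the entries of |C_{21}(C_{11})^{-1} 1| are decreasing in the row index, and the first entry converges, as q → ∞, to α_2(1 − α_1 α_2) / ((1 + α_1)(1 − α_2)). -/
open Matrix Filter

/-- The `q×q` AR(1) matrix with entries `α^{|i−j|}`. -/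
noncomputable def ar1Mat (q : ℕ) (α : ℝ) : Matrix (Fin q) (Fin q) ℝ :=
  Matrix.of fun i j => α ^ (max i.val j.val - min i.val j.val)

/-- The `r×q` cross block with entries `α^{(q+i)−j}` (row `i`, column `j`). -/
noncomputable def arCross (r q : ℕ) (α : ℝ) : Matrix (Fin r) (Fin q) ℝ :=
  Matrix.of fun i j => α ^ (q + i.val - j.val)

noncomputable def ar1Inv (q : ℕ) (α : ℝ) : Matrix (Fin q) (Fin q) ℝ :=
  Matrix.of fun k j =>
    ((if k.val = j.val then
        1 + α ^ 2 - (if j.val = 0 then α ^ 2 else 0) - (if j.val + 1 = q then α ^ 2 else 0)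
      else 0)
      + (if k.val + 1 = j.val then -α else 0)
      + (if k.val = j.val + 1 then -α else 0)) / (1 - α ^ 2)

lemma fin_sum_ite' {q : ℕ} (p : Fin q → Prop) [DecidablePred p] (m : ℕ)
    (hp : ∀ k : Fin q, p k ↔ k.val = m) (f : Fin q → ℝ) :
    ∑ k : Fin q, (if p k then f k else 0) = if hm : m < q then f ⟨m, hm⟩ else 0 := by
  by_cases hm : m < q
  · rw [dif_pos hm, Finset.sum_eq_single (⟨m, hm⟩ : Fin q)]
    · rw [if_pos ((hp _).mpr rfl)]
    · intro b _ hb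
      rw [if_neg]
      rw [hp]
      simpa [Fin.ext_iff] using hb
    · intro habs; exact absurd (Finset.mem_univ _) habs
  · rw [dif_neg hm]
    refine Finset.sum_eq_zero fun k _ => if_neg ?_
    rw [hp]; have := k.isLt; omega

lemma fin_sum_ite_pred {q : ℕ} (p : Fin q → Prop) [DecidablePred p] (m : ℕ)
    (hp : ∀ k : Fin q, p k ↔ k.val + 1 = m) (f : Fin q → ℝ) :
    ∑ k : Fin q, (if p k then f k else 0)
      = if hm : 0 < m ∧ m - 1 < q then f ⟨m - 1, hm.2⟩ else 0 := by
  by_cases hm : 0 < m ∧ m - 1 < q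
  · rw [dif_pos hm, Finset.sum_eq_single (⟨m - 1, hm.2⟩ : Fin q)]
    · rw [if_pos (by rw [hp]; simp; omega)]
    · intro b _ hb
      rw [if_neg]
      rw [hp]
      simp [Fin.ext_iff] at hb
      omega
    · intro habs; exact absurd (Finset.mem_univ _) habs
  · rw [dif_neg hm]
    refine Finset.sum_eq_zero fun k _ => if_neg ?_
    rw [hp]; have := k.isLt; omega

lemma ar1_mul_inv (q : ℕ) (α : ℝ) (h : 1 - α ^ 2 ≠ 0) :
    ar1Mat q α * ar1Inv q α = 1 := by
  ext i j
  rw [Matrix.mul_apply, Matrix.one_apply]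
  simp only [ar1Mat, ar1Inv, Matrix.of_apply]
  have step : ∀ k : Fin q,
      α ^ (max i.val k.val - min i.val k.val) *
        (((if k.val = j.val then
            1 + α ^ 2 - (if j.val = 0 then α ^ 2 else 0) - (if j.val + 1 = q then α ^ 2 else 0)
          else 0)
          + (if k.val + 1 = j.val then -α else 0)
          + (if k.val = j.val + 1 then -α else 0)) / (1 - α ^ 2))
      = ((if k.val = j.val then
            α ^ (max i.val k.val - min i.val k.val) *
              (1 + α ^ 2 - (if j.val = 0 then α ^ 2 else 0) - (if j.val + 1 = q then α ^ 2 else 0))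
          else 0)
          + (if k.val + 1 = j.val then α ^ (max i.val k.val - min i.val k.val) * (-α) else 0)
          + (if k.val = j.val + 1 then α ^ (max i.val k.val - min i.val k.val) * (-α) else 0))
          / (1 - α ^ 2) := by
    intro k
    split_ifs <;> ring
  rw [Finset.sum_congr rfl fun k _ => step k, ← Finset.sum_div,
    Finset.sum_add_distrib, Finset.sum_add_distrib,
    fin_sum_ite' (fun k : Fin q => k.val = j.val) j.val (fun k => Iff.rfl),
    fin_sum_ite_pred (fun k : Fin q => k.val + 1 = j.val) j.val (fun k => Iff.rfl),
    fin_sum_ite' (fun k : Fin q => k.val = j.val + 1) (j.val + 1) (fun k => Iff.rfl)]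
  rw [dif_pos j.isLt]
  obtain ⟨I, hI⟩ := i
  obtain ⟨J, hJ⟩ := j
  simp only [Fin.mk.injEq]
  rw [div_eq_iff h]
  rcases Nat.lt_trichotomy I J with hlt | heq | hgt
  · -- I < J
    rw [if_neg (show ¬ J = 0 by omega), if_neg (show ¬ I = J by omega),
      dif_pos (show 0 < J ∧ J - 1 < q by omega),
      max_eq_right hlt.le, min_eq_left hlt.le,
      max_eq_right (show I ≤ J - 1 by omega), min_eq_left (show I ≤ J - 1 by omega)]
    by_cases hq : J + 1 < q
    · rw [dif_pos hq, if_neg (show ¬ J + 1 = q by omega),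
        max_eq_right (show I ≤ J + 1 by omega), min_eq_left (show I ≤ J + 1 by omega),
        show J - I = (J - 1 - I) + 1 from by omega,
        show J + 1 - I = (J - 1 - I) + 2 from by omega]
      ring
    · rw [dif_neg hq, if_pos (show J + 1 = q by omega),
        show J - I = (J - 1 - I) + 1 from by omega]
      ring
  · -- I = J
    subst heq
    rw [if_pos rfl, max_self, min_self, Nat.sub_self, pow_zero, one_mul]
    by_cases h0 : I = 0
    · rw [if_pos h0, dif_neg (show ¬ (0 < I ∧ I - 1 < q) by omega)]
      by_cases hq : I + 1 < q
      · rw [dif_pos hq, if_neg (show ¬ I + 1 = q by omega),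
          max_eq_right (show I ≤ I + 1 by omega), min_eq_left (show I ≤ I + 1 by omega),
          show I + 1 - I = 1 from by omega]
        ring
      · rw [dif_neg hq, if_pos (show I + 1 = q by omega)]
        ring
    · rw [if_neg h0, dif_pos (show 0 < I ∧ I - 1 < q by omega),
        max_eq_left (show I - 1 ≤ I by omega), min_eq_right (show I - 1 ≤ I by omega),
        show I - (I - 1) = 1 from by omega]
      by_cases hq : I + 1 < q
      · rw [dif_pos hq, if_neg (show ¬ I + 1 = q by omega),
          max_eq_right (show I ≤ I + 1 by omega), min_eq_left (show I ≤ I + 1 by omega),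
          show I + 1 - I = 1 from by omega]
        ring
      · rw [dif_neg hq, if_pos (show I + 1 = q by omega)]
        ring
  · -- I > J
    rw [if_neg (show ¬ J + 1 = q by omega), if_neg (show ¬ I = J by omega),
      dif_pos (show J + 1 < q by omega),
      max_eq_left hgt.le, min_eq_right hgt.le,
      max_eq_left (show J + 1 ≤ I by omega), min_eq_right (show J + 1 ≤ I by omega)]
    by_cases h0 : J = 0
    · rw [if_pos h0, dif_neg (show ¬ (0 < J ∧ J - 1 < q) by omega),
        show I - J = (I - (J + 1)) + 1 from by omega]
      ring
    · rw [if_neg h0, dif_pos (show 0 < J ∧ J - 1 < q by omega),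
        max_eq_left (show J - 1 ≤ I by omega), min_eq_right (show J - 1 ≤ I by omega),
        show I - J = (I - (J + 1)) + 1 from by omega,
        show I - (J - 1) = (I - (J + 1)) + 2 from by omega]
      ring

lemma ar1Mat_inv_eq (q : ℕ) (α : ℝ) (h : 1 - α ^ 2 ≠ 0) :
    (ar1Mat q α)⁻¹ = ar1Inv q α :=
  inv_eq_right_inv (ar1_mul_inv q α h)

lemma ar1Inv_mulVec_one (q : ℕ) (α : ℝ) (h : 1 - α ^ 2 ≠ 0) (hα : 1 + α ≠ 0) (j : Fin q) :
    ((ar1Mat q α)⁻¹ *ᵥ fun _ => (1 : ℝ)) j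
      = (1 - α + (if j.val = 0 then α else 0) + (if j.val + 1 = q then α else 0)) / (1 + α) := by
  rw [ar1Mat_inv_eq q α h]
  simp only [Matrix.mulVec, dotProduct, mul_one, ar1Inv, Matrix.of_apply]
  rw [← Finset.sum_div, Finset.sum_add_distrib, Finset.sum_add_distrib,
    fin_sum_ite' (fun k : Fin q => j.val = k.val) j.val (fun k => eq_comm)
      (fun k => (1 + α ^ 2 - (if k.val = 0 then α ^ 2 else 0)
        - (if k.val + 1 = q then α ^ 2 else 0))),
    fin_sum_ite' (fun k : Fin q => j.val + 1 = k.val) (j.val + 1) (fun k => eq_comm)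
      (fun _ => -α),
    fin_sum_ite_pred (fun k : Fin q => j.val = k.val + 1) j.val (fun k => eq_comm)
      (fun _ => -α),
    dif_pos j.isLt]
  have hjq := j.isLt
  simp only [Fin.val_mk]
  split_ifs <;> rw [div_eq_div_iff h hα] <;> (first | ring1 | (exfalso; omega))

noncomputable def Tq (q : ℕ) (α1 α2 : ℝ) : ℝ :=
  ∑ j : Fin q, α2 ^ (q - j.val) *
    ((1 - α1 + (if j.val = 0 then α1 else 0) + (if j.val + 1 = q then α1 else 0)) / (1 + α1))

lemma cross_entry (r q : ℕ) (α1 α2 : ℝ) (h : 1 - α1 ^ 2 ≠ 0) (hα : 1 + α1 ≠ 0) (i : Fin r) :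
    ((arCross r q α2) *ᵥ ((ar1Mat q α1)⁻¹ *ᵥ fun _ => (1 : ℝ))) i = α2 ^ i.val * Tq q α1 α2 := by
  have hv : ((ar1Mat q α1)⁻¹ *ᵥ fun _ => (1 : ℝ))
      = fun j : Fin q =>
        (1 - α1 + (if j.val = 0 then α1 else 0) + (if j.val + 1 = q then α1 else 0)) / (1 + α1) :=
    funext fun j => ar1Inv_mulVec_one q α1 h hα j
  rw [hv]
  unfold Tq
  rw [Finset.mul_sum]
  simp only [Matrix.mulVec, dotProduct, arCross, Matrix.of_apply]
  refine Finset.sum_congr rfl fun j _ => ?_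
  rw [show q + i.val - j.val = i.val + (q - j.val) from by have := j.isLt; omega, pow_add]
  ring

lemma Tq_nonneg (q : ℕ) (α1 α2 : ℝ) (h0 : 0 ≤ α1) (h1 : α1 ≤ 1) (h2 : 0 ≤ α2) :
    0 ≤ Tq q α1 α2 := by
  apply Finset.sum_nonneg
  intro j _
  apply mul_nonneg (pow_nonneg h2 _)
  apply div_nonneg _ (by linarith)
  split_ifs <;> linarith

lemma Tq_eq (q : ℕ) (hq : 0 < q) (α1 α2 : ℝ) :
    Tq q α1 α2 = ((1 - α1) * (α2 * ∑ k ∈ Finset.range q, α2 ^ k)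
      + α2 ^ q * α1 + α2 * α1) / (1 + α1) := by
  unfold Tq
  have step : ∀ j : Fin q,
      α2 ^ (q - j.val) *
        ((1 - α1 + (if j.val = 0 then α1 else 0) + (if j.val + 1 = q then α1 else 0)) / (1 + α1))
      = (α2 ^ (q - j.val) * (1 - α1)
         + (if j.val = 0 then α2 ^ (q - j.val) * α1 else 0)
         + (if j.val + 1 = q then α2 ^ (q - j.val) * α1 else 0)) / (1 + α1) := by
    intro j; split_ifs <;> ring
  rw [Finset.sum_congr rfl fun j _ => step j, ← Finset.sum_div,
    Finset.sum_add_distrib, Finset.sum_add_distrib,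
    fin_sum_ite' (fun j : Fin q => j.val = 0) 0 (fun j => Iff.rfl)
      (fun j => α2 ^ (q - j.val) * α1),
    fin_sum_ite_pred (fun j : Fin q => j.val + 1 = q) q (fun j => Iff.rfl)
      (fun j => α2 ^ (q - j.val) * α1),
    dif_pos hq, dif_pos (show 0 < q ∧ q - 1 < q from ⟨hq, by omega⟩)]
  congr 1
  simp only [Fin.val_mk, Nat.sub_zero]
  rw [show q - (q - 1) = 1 from by omega, pow_one]
  have hs : ∑ j : Fin q, α2 ^ (q - j.val) * (1 - α1)
      = (∑ k ∈ Finset.range q, α2 ^ k) * (α2 * (1 - α1)) := by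
    rw [Fin.sum_univ_eq_sum_range (fun j => α2 ^ (q - j) * (1 - α1)) q,
      ← Finset.sum_range_reflect (fun j => α2 ^ (q - j) * (1 - α1)) q, ← Finset.sum_mul]
    have h1 : ∑ i ∈ Finset.range q, α2 ^ (q - (q - 1 - i))
        = (∑ k ∈ Finset.range q, α2 ^ k) * α2 := by
      rw [Finset.sum_mul]
      refine Finset.sum_congr rfl fun i hi => ?_
      rw [Finset.mem_range] at hi
      rw [show q - (q - 1 - i) = i + 1 from by omega, pow_succ]
    rw [h1]; ring
  rw [hs]
  ring

lemma Tq_tendsto (α1 α2 : ℝ) (h1a : 0 < α1) (h1b : α1 < 1) (h2a : 0 < α2) (h2b : α2 < 1) :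
    Tendsto (fun q => Tq q α1 α2) atTop
      (nhds (α2 * (1 - α1 * α2) / ((1 + α1) * (1 - α2)))) := by
  have hα : (1:ℝ) + α1 ≠ 0 := by linarith
  have hgeom : Tendsto (fun q => ∑ k ∈ Finset.range q, α2 ^ k) atTop (nhds (1 - α2)⁻¹) :=
    (hasSum_geometric_of_lt_one h2a.le h2b).tendsto_sum_nat
  have hpow : Tendsto (fun q : ℕ => α2 ^ q) atTop (nhds 0) :=
    tendsto_pow_atTop_nhds_zero_of_lt_one h2a.le h2b
  have hmain : Tendsto
      (fun q : ℕ => ((1 - α1) * (α2 * ∑ k ∈ Finset.range q, α2 ^ k)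
        + α2 ^ q * α1 + α2 * α1) / (1 + α1)) atTop
      (nhds (((1 - α1) * (α2 * (1 - α2)⁻¹) + 0 * α1 + α2 * α1) / (1 + α1))) :=
    Tendsto.div_const
      ((((hgeom.const_mul α2).const_mul (1 - α1)).add (hpow.mul_const α1)).add
        tendsto_const_nhds) _
  have heq : ((1 - α1) * (α2 * (1 - α2)⁻¹) + 0 * α1 + α2 * α1) / (1 + α1)
      = α2 * (1 - α1 * α2) / ((1 + α1) * (1 - α2)) := by
    have h2 : (1:ℝ) - α2 ≠ 0 := by linarith
    field_simp
    ring
  rw [heq] at hmain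
  apply hmain.congr'
  filter_upwards [eventually_gt_atTop 0] with q hq
  exact (Tq_eq q hq α1 α2).symm

/-- In the block-AR(1) correlation structure with `α₁, α₂ ∈ (0,1)`,
the entries of `|C_{21}(C_{11})⁻¹𝟙|` are decreasing in the row index, and the first entry
converges, as `q → ∞`, to `α₂(1 − α₁α₂)/((1 + α₁)(1 − α₂))`. -/
theorem stmt15 (α1 α2 : ℝ) (hα1 : 0 < α1 ∧ α1 < 1) (hα2 : 0 < α2 ∧ α2 < 1) :
    (∀ q r : ℕ, ∀ i i' : Fin r, i ≤ i' →
      |((arCross r q α2) *ᵥ ((ar1Mat q α1)⁻¹ *ᵥ fun _ => (1 : ℝ))) i'|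
        ≤ |((arCross r q α2) *ᵥ ((ar1Mat q α1)⁻¹ *ᵥ fun _ => (1 : ℝ))) i|) ∧
    Tendsto
      (fun q : ℕ =>
        |((arCross 1 q α2) *ᵥ ((ar1Mat q α1)⁻¹ *ᵥ fun _ => (1 : ℝ))) 0|)
      atTop (nhds (α2 * (1 - α1 * α2) / ((1 + α1) * (1 - α2)))) := by
  obtain ⟨h1a, h1b⟩ := hα1
  obtain ⟨h2a, h2b⟩ := hα2
  have h : 1 - α1 ^ 2 ≠ 0 := by nlinarith
  have hα : 1 + α1 ≠ 0 := by linarith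
  constructor
  · intro q r i i' hii
    rw [cross_entry r q α1 α2 h hα i, cross_entry r q α1 α2 h hα i', abs_mul, abs_mul]
    apply mul_le_mul_of_nonneg_right _ (abs_nonneg _)
    rw [abs_of_nonneg (pow_nonneg h2a.le _), abs_of_nonneg (pow_nonneg h2a.le _)]
    exact pow_le_pow_of_le_one h2a.le h2b.le hii
  · refine (Tq_tendsto α1 α2 h1a h1b h2a h2b).congr fun q => ?_
    rw [cross_entry 1 q α1 α2 h hα 0, show ((0 : Fin 1) : ℕ) = 0 from rfl, pow_zero, one_mul]
    exact (abs_of_nonneg (Tq_nonneg q α1 α2 h1a.le h1b.le h2a.le)).symm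
end

section
/- For the univariate penalized problem minimizing (1/2)(z − γ)² + p_{SCAD,λ}(|γ|) with a > 2, the minimizer is: sign(z)(|z|−λ)_+ if |z| ≤ 2λ; ((a−1)z − sign(z) a λ)/(a−2) if 2λ < |z| ≤ aλ; and z if |z| > aλ. -/
/-- The SCAD penalty with tuning parameters `lam` and `a`. -/
noncomputable def scadPenalty (lam a β : ℝ) : ℝ :=
  if |β| ≤ lam then lam * |β|
  else if |β| ≤ a * lam then (a * lam * |β| - (β ^ 2 + lam ^ 2) / 2) / (a - 1)
  else lam ^ 2 * (a ^ 2 - 1) / (2 * (a - 1))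

/-- The SCAD thresholding rule. -/
noncomputable def scadThreshold (lam a z : ℝ) : ℝ :=
  if |z| ≤ 2 * lam then Real.sign z * max (|z| - lam) 0
  else if |z| ≤ a * lam then ((a - 1) * z - Real.sign z * a * lam) / (a - 2)
  else z

lemma pen1 (lam a γ : ℝ) (hγ : 0 ≤ γ) (h : γ ≤ lam) :
    scadPenalty lam a γ = lam * γ := by
  simp [scadPenalty, abs_of_nonneg hγ, h]

lemma pen2 (lam a γ : ℝ) (hγ : 0 ≤ γ) (h1 : lam < γ) (h2 : γ ≤ a * lam) :
    scadPenalty lam a γ = (a * lam * γ - (γ ^ 2 + lam ^ 2) / 2) / (a - 1) := by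
  simp [scadPenalty, abs_of_nonneg hγ, h1.not_ge, h2]

lemma pen3 (lam a γ : ℝ) (hγ : 0 ≤ γ) (ha : 1 < a) (hlam : 0 < lam) (h2 : a * lam < γ) :
    scadPenalty lam a γ = lam ^ 2 * (a + 1) / 2 := by
  have h1 : ¬ γ ≤ lam := by nlinarith
  simp only [scadPenalty, abs_of_nonneg hγ, h1, h2.not_ge, if_false]
  have : a - 1 ≠ 0 := by linarith
  field_simp
  ring

lemma pen_neg (lam a β : ℝ) : scadPenalty lam a (-β) = scadPenalty lam a β := by
  simp [scadPenalty, abs_neg, neg_sq]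

lemma thresh_neg (lam a z : ℝ) : scadThreshold lam a (-z) = - scadThreshold lam a z := by
  simp only [scadThreshold, abs_neg, Real.sign_neg]
  split_ifs <;> ring

set_option maxHeartbeats 1000000 in
theorem key (lam a z : ℝ) (hlam : 0 < lam) (ha : 2 < a) (hz : 0 ≤ z) (γ : ℝ) (hγ : 0 ≤ γ) :
    (1 / 2) * (z - scadThreshold lam a z) ^ 2 + scadPenalty lam a (scadThreshold lam a z)
      ≤ (1 / 2) * (z - γ) ^ 2 + scadPenalty lam a γ := by
  have haz : |z| = z := abs_of_nonneg hz
  have ha1 : (1:ℝ) < a := by linarith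
  have ha2 : (0:ℝ) < a - 2 := by linarith
  have ha1' : (0:ℝ) < a - 1 := by linarith
  have hne1 : (a:ℝ) - 1 ≠ 0 := by linarith
  have hne2 : (a:ℝ) - 2 ≠ 0 := by linarith
  by_cases hz2 : z ≤ 2 * lam
  · by_cases hz1 : z ≤ lam
    · -- t = 0
      have ht : scadThreshold lam a z = 0 := by
        rw [scadThreshold, haz, if_pos hz2, max_eq_right (by linarith : z - lam ≤ 0), mul_zero]
      rw [ht]
      have h0 : scadPenalty lam a 0 = 0 := by simp [scadPenalty, hlam.le]
      rw [h0]
      rcases le_or_gt γ lam with hg | hg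
      · rw [pen1 lam a γ hγ hg]; nlinarith
      · rcases le_or_gt γ (a*lam) with hg2 | hg2
        · rw [pen2 lam a γ hγ hg hg2, ← sub_nonneg]
          have expand : (1:ℝ)/2 * (z-γ)^2 + (a * lam * γ - (γ ^ 2 + lam ^ 2) / 2) / (a - 1)
              + 0 - ((1:ℝ)/2 * (z - 0)^2 + 0)
              = ((a-2)*γ^2 + 2*γ*(a*lam-(a-1)*z) - lam^2) / (2*(a-1)) := by
            field_simp; ring
          rw [show (1:ℝ)/2 * (z-γ)^2 + (a * lam * γ - (γ ^ 2 + lam ^ 2) / 2) / (a - 1)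
              - ((1:ℝ)/2 * (z - 0)^2 + 0)
              = ((a-2)*γ^2 + 2*γ*(a*lam-(a-1)*z) - lam^2) / (2*(a-1)) by
            field_simp; ring]
          apply div_nonneg _ (by linarith)
          have hA : (0:ℝ) ≤ γ - lam := by linarith
          have hB : (0:ℝ) ≤ a*lam - (a-1)*z := by nlinarith
          nlinarith [mul_nonneg hA hB, mul_nonneg hA hA, mul_nonneg ha2.le (mul_nonneg hA hA)]
        · rw [pen3 lam a γ hγ ha1 hlam hg2]
          nlinarith [sq_nonneg (γ - lam)]
    · push_neg at hz1
      have hzpos : 0 < z := lt_trans hlam hz1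
      have ht : scadThreshold lam a z = z - lam := by
        rw [scadThreshold, haz, if_pos hz2, max_eq_left (by linarith : (0:ℝ) ≤ z - lam),
          Real.sign_of_pos hzpos, one_mul]
      rw [ht, pen1 lam a _ (by linarith) (by linarith)]
      rcases le_or_gt γ lam with hg | hg
      · rw [pen1 lam a γ hγ hg]; nlinarith [sq_nonneg (z - γ - lam)]
      · rcases le_or_gt γ (a*lam) with hg2 | hg2
        · rw [pen2 lam a γ hγ hg hg2, ← sub_nonneg]
          rw [show (1:ℝ)/2 * (z-γ)^2 + (a * lam * γ - (γ ^ 2 + lam ^ 2) / 2) / (a - 1)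
              - ((1:ℝ)/2 * (z - (z - lam))^2 + lam*(z-lam))
              = ((a-2)*(γ-lam)^2 + 2*(a-1)*(2*lam-z)*(γ-lam) + (a-1)*(z-2*lam)^2) / (2*(a-1)) by
            field_simp; ring]
          apply div_nonneg _ (by linarith)
          nlinarith [sq_nonneg (γ-lam), sq_nonneg (z-2*lam),
            mul_nonneg (by linarith : (0:ℝ) ≤ 2*lam - z) (by linarith : (0:ℝ) ≤ γ - lam)]
        · rw [pen3 lam a γ hγ ha1 hlam hg2]
          nlinarith [sq_nonneg (z - γ)]
  · push_neg at hz2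
    by_cases hz3 : z ≤ a * lam
    · -- middle region
      have hzpos : 0 < z := by nlinarith
      have ht : scadThreshold lam a z = ((a-1)*z - a*lam)/(a-2) := by
        simp [scadThreshold, haz, hz2.not_ge, hz3, Real.sign_of_pos hzpos]
      have htL : lam < ((a-1)*z - a*lam)/(a-2) := by
        rw [lt_div_iff₀ ha2]; nlinarith
      have htU : ((a-1)*z - a*lam)/(a-2) ≤ a*lam := by
        rw [div_le_iff₀ ha2]; nlinarith
      rw [ht, pen2 lam a _ (by linarith [htL]) htL htU]
      rcases le_or_gt γ lam with hg | hg
      · rw [pen1 lam a γ hγ hg, ← sub_nonneg]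
        rw [show (1:ℝ)/2 * (z-γ)^2 + lam*γ
            - ((1:ℝ)/2 * (z - ((a-1)*z - a*lam)/(a-2))^2
              + (a * lam * (((a-1)*z - a*lam)/(a-2)) - ((((a-1)*z - a*lam)/(a-2)) ^ 2 + lam ^ 2) / 2) / (a - 1))
            = (γ-lam)*(γ+3*lam-2*z)/2 + (a-1)*(z-2*lam)^2/(2*(a-2)) by
          field_simp; ring]
        have h1 : (0:ℝ) ≤ (γ-lam)*(γ+3*lam-2*z)/2 := by
          apply div_nonneg _ (by norm_num)
          have : (γ-lam)*(γ+3*lam-2*z) = (lam-γ)*(2*z-γ-3*lam) := by ring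
          rw [this]
          apply mul_nonneg <;> linarith
        have h2 : (0:ℝ) ≤ (a-1)*(z-2*lam)^2/(2*(a-2)) := by positivity
        linarith
      · rcases le_or_gt γ (a*lam) with hg2 | hg2
        · rw [pen2 lam a γ hγ hg hg2, ← sub_nonneg]
          rw [show (1:ℝ)/2 * (z-γ)^2 + (a * lam * γ - (γ ^ 2 + lam ^ 2) / 2) / (a - 1)
              - ((1:ℝ)/2 * (z - ((a-1)*z - a*lam)/(a-2))^2
                + (a * lam * (((a-1)*z - a*lam)/(a-2)) - ((((a-1)*z - a*lam)/(a-2)) ^ 2 + lam ^ 2) / 2) / (a - 1))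
              = ((a-2)*γ - (a-1)*z + a*lam)^2 / (2*(a-1)*(a-2)) by
            field_simp; ring]
          positivity
        · rw [pen3 lam a γ hγ ha1 hlam hg2, ← sub_nonneg]
          rw [show (1:ℝ)/2 * (z-γ)^2 + lam^2*(a+1)/2
              - ((1:ℝ)/2 * (z - ((a-1)*z - a*lam)/(a-2))^2
                + (a * lam * (((a-1)*z - a*lam)/(a-2)) - ((((a-1)*z - a*lam)/(a-2)) ^ 2 + lam ^ 2) / 2) / (a - 1))
              = (γ-a*lam)*(γ+a*lam-2*z)/2 + (a-1)*(a*lam-z)^2/(2*(a-2)) by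
            field_simp; ring]
          have h1 : (0:ℝ) ≤ (γ-a*lam)*(γ+a*lam-2*z)/2 := by
            apply div_nonneg _ (by norm_num)
            apply mul_nonneg <;> linarith
          have h2 : (0:ℝ) ≤ (a-1)*(a*lam-z)^2/(2*(a-2)) := by positivity
          linarith
    · push_neg at hz3
      have ht : scadThreshold lam a z = z := by
        simp [scadThreshold, haz, hz2.not_ge, hz3.not_ge]
      rw [ht, pen3 lam a z hz ha1 hlam hz3]
      rcases le_or_gt γ lam with hg | hg
      · rw [pen1 lam a γ hγ hg]
        have h1 : (a-1)*lam < z - lam := by nlinarith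
        have h2 : (0:ℝ) ≤ (lam - γ)*(2*z - γ - 3*lam) := by
          apply mul_nonneg (by linarith); nlinarith
        nlinarith [h2, mul_self_le_mul_self (show (0:ℝ) ≤ (a-1)*lam by positivity) h1.le,
          mul_nonneg (mul_nonneg hlam.le hlam.le) (mul_nonneg ha1'.le ha2.le)]
      · rcases le_or_gt γ (a*lam) with hg2 | hg2
        · rw [pen2 lam a γ hγ hg hg2, ← sub_nonneg]
          rw [show (1:ℝ)/2 * (z-γ)^2 + (a * lam * γ - (γ ^ 2 + lam ^ 2) / 2) / (a - 1)
              - ((1:ℝ)/2 * (z - z)^2 + lam^2*(a+1)/2)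
              = ((a-2)*(γ-a*lam)^2 + (a-1)*(z-a*lam)*(z+a*lam-2*γ)) / (2*(a-1)) by
            field_simp; ring]
          apply div_nonneg _ (by linarith)
          have h1 : (0:ℝ) ≤ (z-a*lam)*(z+a*lam-2*γ) := by
            apply mul_nonneg (by linarith); linarith
          nlinarith [sq_nonneg (γ - a*lam)]
        · rw [pen3 lam a γ hγ ha1 hlam hg2]
          nlinarith [sq_nonneg (z - γ)]

/-- For the univariate penalized problem minimizing
`½(z − γ)² + p_{SCAD,λ}(|γ|)` with `a > 2` and `λ > 0`, the minimizer is: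
`sign(z)(|z|−λ)₊` if `|z| ≤ 2λ`; `((a−1)z − sign(z)aλ)/(a−2)` if `2λ < |z| ≤ aλ`;
and `z` if `|z| > aλ`. -/
theorem stmt18 (lam a z : ℝ) (hlam : 0 < lam) (ha : 2 < a) :
    ∀ γ : ℝ,
      (1 / 2) * (z - scadThreshold lam a z) ^ 2 + scadPenalty lam a (scadThreshold lam a z)
        ≤ (1 / 2) * (z - γ) ^ 2 + scadPenalty lam a γ := by
  intro γ
  have habs : scadPenalty lam a |γ| = scadPenalty lam a γ := by
    simp [scadPenalty, abs_abs, sq_abs]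
  rcases le_or_gt 0 z with hz | hz
  · have h := key lam a z hlam ha hz |γ| (abs_nonneg γ)
    have h2 : (1/2) * (z - |γ|)^2 ≤ (1/2) * (z - γ)^2 := by
      nlinarith [mul_nonneg hz (sub_nonneg.mpr (le_abs_self γ)), sq_abs γ]
    linarith [h, h2, habs.le, habs.ge]
  · have h := key lam a (-z) hlam ha (by linarith) |γ| (abs_nonneg γ)
    rw [thresh_neg] at h
    have e1 : (-z - -scadThreshold lam a z)^2 = (z - scadThreshold lam a z)^2 := by ring
    rw [e1, pen_neg] at h
    have h2 : (1/2) * (-z - |γ|)^2 ≤ (1/2) * (z - γ)^2 := by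
      nlinarith [sq_abs γ, mul_nonneg (show (0:ℝ) ≤ -z by linarith) (show (0:ℝ) ≤ γ + |γ| by linarith [neg_abs_le γ])]
    linarith [h, h2, habs.le]
end
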